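/- arXiv:1212.1387 — 5 statements merged into one kernel-verified Lean document; each statement's English description precedes it below -/
import Mathlib

section
/- Every SJSK-matrix A is a τ^<-matrix: l(A) > 0, every principal submatrix of A has a real eigenvalue, and l(A(α)) < l(A(β)) < ∞ whenever ∅ ≠ β ⊊ α ⊆ {1,…,n}. -/
/-!
Fix a principal submatrix `B = A(α)`. Sign-symmetry of its compound of order `|α| - 1` gives a
signature `ε` with `ε i * ε j * adjugate B i j > 0`. The diagonal cofactors are then positive, so
every principal minor of `A` is positive and `B - t` is nonsingular for `t ≤ 0`; and
`P = S B⁻¹ S`, `S = diagonal ε`, is entrywise positive. Perron's theorem gives `ρ > 0` and a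
positive left eigenvector `v` of `P`, and `ρ⁻¹` is an eigenvalue of `B`. If `B y = t y` with
`t > 0`, then `t⁻¹ |S y| ≤ P |S y|`, and pairing with `v` gives `t⁻¹ ≤ ρ`; so `l(B) = ρ⁻¹`.
If `t ≤ ρ⁻¹` were an eigenvalue of `B` with row and column `r` removed, extending an eigenvector
by `0` would give `z ≠ 0` with `z r = 0` and `t⁻¹ z = P z + b P e_r`. For the sign of `z` with
`t⁻¹ z ≤ P z`, pairing with `v` forces equality on the positive part of `z`, which the positivity
of `P` rules out at the zero coordinate `r`. So `l` strictly decreases when an index is added,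
hence along every strict inclusion.
-/

open Matrix

/-- The minor of the matrix `A` on the row set `α` and the column set `β`
(rows and columns taken in increasing order); junk value `0` if the
cardinalities of `α` and `β` differ. -/
noncomputable def minorOn {n : ℕ} (A : Matrix (Fin n) (Fin n) ℝ)
    (α β : Finset (Fin n)) : ℝ :=
  if h : β.card = α.card then
    (A.submatrix (⇑(α.orderEmbOfFin rfl)) (⇑(β.orderEmbOfFin h))).det
  else 0

/-- The principal submatrix `A(α)` of `A` on the index set `α`. -/
def psub {n : ℕ} (A : Matrix (Fin n) (Fin n) ℝ) (α : Finset (Fin n)) :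
    Matrix (Fin α.card) (Fin α.card) ℝ :=
  A.submatrix (⇑(α.orderEmbOfFin rfl)) (⇑(α.orderEmbOfFin rfl))

/-- `A` is a Kotelyansky (K) matrix: all principal minors are positive and all
almost principal minors are nonnegative. -/
def IsK {n : ℕ} (A : Matrix (Fin n) (Fin n) ℝ) : Prop :=
  (∀ α : Finset (Fin n), α.Nonempty → 0 < minorOn A α α) ∧
  (∀ (α : Finset (Fin n)) (r s : Fin n), r ∈ α → s ∈ α → r ≠ s →
    0 ≤ minorOn A (α.erase r) (α.erase s))

/-- `A` is a strictly Kotelyansky (SK) matrix: all principal minors and all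
almost principal minors are positive. -/
def IsSK {n : ℕ} (A : Matrix (Fin n) (Fin n) ℝ) : Prop :=
  (∀ α : Finset (Fin n), α.Nonempty → 0 < minorOn A α α) ∧
  (∀ (α : Finset (Fin n)) (r s : Fin n), r ∈ α → s ∈ α → r ≠ s →
    0 < minorOn A (α.erase r) (α.erase s))

/-- The `j`-th compound matrix of `A`: the matrix of all `j×j` minors of `A`,
indexed by the `j`-element subsets of the index set. -/
noncomputable def compound {m : ℕ} (A : Matrix (Fin m) (Fin m) ℝ) (j : ℕ) :
    Matrix {s : Finset (Fin m) // s.card = j} {s : Finset (Fin m) // s.card = j} ℝ :=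
  fun s t => minorOn A s.1 t.1

/-- `A` is J-sign-symmetric for the subset `J` of its index set. -/
def IsJS {ι : Type*} (J : Set ι) (A : Matrix ι ι ℝ) : Prop :=
  (∀ i j, ((i ∈ J ∧ j ∈ J) ∨ (i ∉ J ∧ j ∉ J)) → 0 ≤ A i j) ∧
  (∀ i j, ((i ∈ J ∧ j ∉ J) ∨ (i ∉ J ∧ j ∈ J)) → A i j ≤ 0)

/-- `A` is strictly J-sign-symmetric: J-sign-symmetric with no zero entries. -/
def IsSJS {ι : Type*} (J : Set ι) (A : Matrix ι ι ℝ) : Prop :=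
  IsJS J A ∧ ∀ i j, A i j ≠ 0

/-- `A` is strictly totally J-sign-symmetric: every compound matrix `A^(j)`,
`1 ≤ j ≤ n`, is strictly J-sign-symmetric for some subset of its index set. -/
def IsSTJS {n : ℕ} (A : Matrix (Fin n) (Fin n) ℝ) : Prop :=
  ∀ j, 1 ≤ j → j ≤ n →
    ∃ J : Set {s : Finset (Fin n) // s.card = j}, IsSJS J (compound A j)

/-- `A` is J-sign-symmetric Kotelyansky (JSK). -/
def IsJSK {n : ℕ} (A : Matrix (Fin n) (Fin n) ℝ) : Prop :=
  (∀ α : Finset (Fin n), α.Nonempty → 0 < minorOn A α α) ∧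
  ∀ α : Finset (Fin n), 2 ≤ α.card →
    ∃ J : Set {s : Finset (Fin α.card) // s.card = α.card - 1},
      IsJS J (compound (psub A α) (α.card - 1))

/-- `A` is strictly J-sign-symmetric Kotelyansky (SJSK). -/
def IsSJSK {n : ℕ} (A : Matrix (Fin n) (Fin n) ℝ) : Prop :=
  0 < A.det ∧
  ∀ α : Finset (Fin n), 2 ≤ α.card →
    ∃ J : Set {s : Finset (Fin α.card) // s.card = α.card - 1},
      IsSJS J (compound (psub A α) (α.card - 1))

/-- `l(B)`: the smallest real eigenvalue of `B`, or `∞` (`⊤` in `EReal`) if `B`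
has no real eigenvalues. -/
noncomputable def lval {m : ℕ} (B : Matrix (Fin m) (Fin m) ℝ) : EReal :=
  sInf (insert (⊤ : EReal) ((fun t : ℝ => (t : EReal)) '' {t : ℝ | B.charpoly.IsRoot t}))


section Minors

variable {N : ℕ}

theorem minorOn_eq_det_submatrix {k : ℕ} (A : Matrix (Fin N) (Fin N) ℝ) {s t : Finset (Fin N)}
    {f g : Fin k → Fin N} (hf : StrictMono f) (hg : StrictMono g) (hfs : ∀ i, f i ∈ s)
    (hgt : ∀ i, g i ∈ t) (hs : s.card = k) (ht : t.card = k) :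
    minorOn A s t = (A.submatrix f g).det := by
  subst hs
  rw [minorOn, dif_pos ht, Finset.orderEmbOfFin_unique rfl hfs hf,
    Finset.orderEmbOfFin_unique ht hgt hg]

theorem minorOn_self (A : Matrix (Fin N) (Fin N) ℝ) (s : Finset (Fin N)) :
    minorOn A s s = (psub A s).det :=
  dif_pos rfl

theorem minorOn_univ (A : Matrix (Fin N) (Fin N) ℝ) :
    minorOn A Finset.univ Finset.univ = A.det := by
  rw [minorOn_eq_det_submatrix A strictMono_id strictMono_id (fun _ => Finset.mem_univ _)
    (fun _ => Finset.mem_univ _) (Finset.card_fin N) (Finset.card_fin N), submatrix_id_id]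

theorem minorOn_empty (A : Matrix (Fin N) (Fin N) ℝ) : minorOn A ∅ ∅ = 1 :=
  (minorOn_self A ∅).trans det_fin_zero

theorem minorOn_submatrix_self {k : ℕ} (A : Matrix (Fin N) (Fin N) ℝ) {e : Fin k → Fin N}
    (he : StrictMono e) (u : Finset (Fin k)) :
    minorOn (A.submatrix e e) u u = minorOn A (u.image e) (u.image e) := by
  have hmono : StrictMono (e ∘ u.orderEmbOfFin rfl) := he.comp (u.orderEmbOfFin rfl).strictMono
  have hmem : ∀ i, (e ∘ u.orderEmbOfFin rfl) i ∈ u.image e :=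
    fun i => Finset.mem_image_of_mem e (u.orderEmbOfFin_mem rfl i)
  have hcard : (u.image e).card = u.card := Finset.card_image_of_injective u he.injective
  rw [minorOn_self, psub, submatrix_submatrix,
    minorOn_eq_det_submatrix A hmono hmono hmem hmem hcard hcard]

theorem exists_orderEmbOfFin_eq {α : Finset (Fin N)} {x : Fin N} (hx : x ∈ α) :
    ∃ r, α.orderEmbOfFin rfl r = x := by
  rwa [← Set.mem_range, Finset.range_orderEmbOfFin]

theorem minorOn_psub_self (A : Matrix (Fin N) (Fin N) ℝ) (α : Finset (Fin N))
    (u : Finset (Fin α.card)) :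
    minorOn (psub A α) u u =
      minorOn A (u.image (α.orderEmbOfFin rfl)) (u.image (α.orderEmbOfFin rfl)) :=
  minorOn_submatrix_self A (α.orderEmbOfFin rfl).strictMono u

theorem adjugate_apply_eq_minorOn {m : ℕ} (M : Matrix (Fin m) (Fin m) ℝ) (i j : Fin m) :
    M.adjugate i j =
      (-1) ^ ((j : ℕ) + i) * minorOn M (Finset.univ.erase j) (Finset.univ.erase i) := by
  obtain ⟨k, rfl⟩ : ∃ k, m = k + 1 := ⟨m - 1, by have := i.pos; omega⟩
  have hcard : ∀ r : Fin (k + 1), (Finset.univ.erase r).card = k := fun r => by simp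
  rw [adjugate_fin_succ_eq_det_submatrix, minorOn_eq_det_submatrix M (Fin.strictMono_succAbove j)
    (Fin.strictMono_succAbove i) (fun _ => by simp [Fin.succAbove_ne])
    (fun _ => by simp [Fin.succAbove_ne]) (hcard j) (hcard i)]

theorem adjugate_apply_self {m : ℕ} (M : Matrix (Fin m) (Fin m) ℝ) (j : Fin m) :
    M.adjugate j j = minorOn M (Finset.univ.erase j) (Finset.univ.erase j) := by
  rw [adjugate_apply_eq_minorOn, ← two_mul, pow_mul, neg_one_sq, one_pow, one_mul]

theorem adjugate_psub_apply_self (A : Matrix (Fin N) (Fin N) ℝ) (α : Finset (Fin N))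
    (r : Fin α.card) :
    (psub A α).adjugate r r =
      minorOn A (α.erase (α.orderEmbOfFin rfl r)) (α.erase (α.orderEmbOfFin rfl r)) := by
  rw [adjugate_apply_self, minorOn_psub_self, Finset.image_erase (α.orderEmbOfFin rfl).injective,
    Finset.image_orderEmbOfFin_univ]

theorem psub_sub_smul_one (A : Matrix (Fin N) (Fin N) ℝ) (α : Finset (Fin N)) (t : ℝ) :
    psub (A - t • 1) α = psub A α - t • 1 := by
  ext i j
  simp [psub, one_apply, (α.orderEmbOfFin rfl).injective.eq_iff]

theorem psub_add (A B : Matrix (Fin N) (Fin N) ℝ) (α : Finset (Fin N)) :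
    psub (A + B) α = psub A α + psub B α :=
  rfl

theorem psub_diagonal (d : Fin N → ℝ) (α : Finset (Fin N)) :
    psub (diagonal d) α = diagonal (d ∘ α.orderEmbOfFin rfl) :=
  submatrix_diagonal_embedding d (α.orderEmbOfFin rfl).toEmbedding

end Minors

theorem Matrix.det_add_diagonal_single {ι R : Type*} [Fintype ι] [DecidableEq ι] [CommRing R]
    (M : Matrix ι ι R) (j : ι) (c : R) :
    (M + diagonal (Pi.single j c)).det = M.det + c * M.adjugate j j := by
  have hrow : M + diagonal (Pi.single j c) = M.updateRow j (M j + c • Pi.single j 1) := by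
    ext a b
    rcases eq_or_ne a j with rfl | ha
    · simp [diagonal_apply, Pi.single_apply, eq_comm]
    · simp [diagonal_apply, ha]
  rw [hrow, det_updateRow_add, updateRow_eq_self, det_updateRow_smul, adjugate_apply]

def IsPMatrix {m : ℕ} (B : Matrix (Fin m) (Fin m) ℝ) : Prop :=
  ∀ s, 0 < minorOn B s s

namespace IsPMatrix

variable {m : ℕ} {B : Matrix (Fin m) (Fin m) ℝ}

theorem det_pos (hB : IsPMatrix B) : 0 < B.det :=
  minorOn_univ B ▸ hB Finset.univ

theorem add_diagonal_single (hB : IsPMatrix B) (j : Fin m) {c : ℝ} (hc : 0 ≤ c) :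
    IsPMatrix (B + diagonal (Pi.single j c)) := by
  intro s
  rw [minorOn_self, psub_add, psub_diagonal]
  by_cases hj : j ∈ s
  · obtain ⟨r, rfl⟩ := exists_orderEmbOfFin_eq hj
    have hsingle : Pi.single (s.orderEmbOfFin rfl r) c ∘ s.orderEmbOfFin rfl = Pi.single r c := by
      ext i
      simp [Pi.single_apply, (s.orderEmbOfFin rfl).injective.eq_iff]
    rw [hsingle, det_add_diagonal_single, ← minorOn_self, adjugate_psub_apply_self]
    have := hB s
    have := hB (s.erase (s.orderEmbOfFin rfl r))
    positivity
  · rw [show Pi.single j c ∘ s.orderEmbOfFin rfl = 0 from ?_, diagonal_zero', add_zero,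
      ← minorOn_self]
    · exact hB s
    · ext i
      exact Pi.single_eq_of_ne (ne_of_mem_of_not_mem (s.orderEmbOfFin_mem rfl i) hj) _

theorem add_diagonal (hB : IsPMatrix B) {d : Fin m → ℝ} (hd : 0 ≤ d) :
    IsPMatrix (B + diagonal d) := by
  have key : ∀ T : Finset (Fin m), IsPMatrix (B + diagonal (∑ j ∈ T, Pi.single j (d j))) := by
    intro T
    induction T using Finset.induction_on with
    | empty => simpa using hB
    | insert j T hj ih =>
      have hsplit : diagonal (∑ x ∈ insert j T, Pi.single x (d x)) =
          diagonal (∑ x ∈ T, Pi.single x (d x)) + diagonal (Pi.single j (d j)) := by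
        rw [diagonal_add]
        congr 1
        ext i
        simp [Finset.sum_insert hj, add_comm]
      rw [hsplit, ← add_assoc]
      exact ih.add_diagonal_single j (hd j)
  simpa [Finset.univ_sum_single] using key Finset.univ

theorem sub_smul_one (hB : IsPMatrix B) {t : ℝ} (ht : t ≤ 0) : IsPMatrix (B - t • 1) := by
  rw [sub_eq_add_neg, smul_one_eq_diagonal, diagonal_neg]
  exact hB.add_diagonal fun _ => by simpa using ht

end IsPMatrix

theorem IsSJS.exists_sign {ι : Type*} {J : Set ι} {M : Matrix ι ι ℝ} (hM : IsSJS J M) :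
    ∃ σ : ι → ℝ, (∀ i, σ i * σ i = 1) ∧ ∀ i j, 0 < σ i * σ j * M i j := by
  classical
  obtain ⟨⟨hsame, hdiff⟩, hne⟩ := hM
  refine ⟨fun i => if i ∈ J then 1 else -1, fun i => by dsimp only; split_ifs <;> norm_num,
    fun i j => ?_⟩
  by_cases hi : i ∈ J <;> by_cases hj : j ∈ J <;> simp only [hi, hj, if_true, if_false]
  · simpa using (hsame i j (.inl ⟨hi, hj⟩)).lt_of_ne' (hne i j)
  · simpa using (hdiff i j (.inl ⟨hi, hj⟩)).lt_of_ne (hne i j)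
  · simpa using (hdiff i j (.inr ⟨hi, hj⟩)).lt_of_ne (hne i j)
  · simpa using (hsame i j (.inr ⟨hi, hj⟩)).lt_of_ne' (hne i j)

theorem isSJS_univ_of_pos {ι : Type*} {M : Matrix ι ι ℝ} (hM : ∀ i j, 0 < M i j) :
    IsSJS Set.univ M :=
  ⟨⟨fun i j _ => (hM i j).le, fun i j h => by simp at h⟩, fun i j => (hM i j).ne'⟩

theorem isSJS_univ_compound_zero {m j : ℕ} (B : Matrix (Fin m) (Fin m) ℝ) (hj : j = 0) :
    IsSJS Set.univ (compound B j) := by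
  subst hj
  refine isSJS_univ_of_pos fun s t => ?_
  rw [compound, Finset.card_eq_zero.1 s.2, Finset.card_eq_zero.1 t.2, minorOn_empty]
  exact one_pos

theorem exists_sign_adjugate_of_isSJS_compound {m : ℕ} {B : Matrix (Fin m) (Fin m) ℝ}
    {J : Set {s : Finset (Fin m) // s.card = m - 1}} (hJ : IsSJS J (compound B (m - 1))) :
    ∃ ε : Fin m → ℝ, (∀ i, ε i * ε i = 1) ∧ ∀ i j, 0 < ε i * ε j * B.adjugate i j := by
  obtain ⟨σ, hσ, hσB⟩ := hJ.exists_sign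
  let co : Fin m → {s : Finset (Fin m) // s.card = m - 1} := fun i =>
    ⟨Finset.univ.erase i, by simp⟩
  refine ⟨fun i => (-1) ^ (i : ℕ) * σ (co i), fun i => ?_, fun i j => ?_⟩
  · calc (-1) ^ (i : ℕ) * σ (co i) * ((-1) ^ (i : ℕ) * σ (co i))
        = ((-1) ^ (i : ℕ) * (-1) ^ (i : ℕ)) * (σ (co i) * σ (co i)) := by ring
      _ = 1 := by rw [← pow_add, ← two_mul, pow_mul, neg_one_sq, one_pow, hσ, one_mul]
  · have hsign : ((-1 : ℝ) ^ (i : ℕ) * (-1) ^ (j : ℕ)) * (-1) ^ ((j : ℕ) + i) = 1 := by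
      rw [← pow_add, ← pow_add, show (i : ℕ) + j + (j + i) = 2 * (i + j) by ring, pow_mul,
        neg_one_sq, one_pow]
    calc 0 < σ (co j) * σ (co i) * compound B (m - 1) (co j) (co i) := hσB _ _
      _ = ((-1) ^ (i : ℕ) * (-1) ^ (j : ℕ) * (-1) ^ ((j : ℕ) + i)) *
            (σ (co i) * σ (co j) * minorOn B (Finset.univ.erase j) (Finset.univ.erase i)) := by
          rw [hsign, compound]; ring
      _ = (-1) ^ (i : ℕ) * σ (co i) * ((-1) ^ (j : ℕ) * σ (co j)) * B.adjugate i j := by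
          rw [adjugate_apply_eq_minorOn]; ring

namespace IsSJSK

variable {n : ℕ} {A : Matrix (Fin n) (Fin n) ℝ}

theorem exists_sign_adjugate_psub (hA : IsSJSK A) (α : Finset (Fin n)) :
    ∃ ε : Fin α.card → ℝ, (∀ i, ε i * ε i = 1) ∧
      ∀ i j, 0 < ε i * ε j * (psub A α).adjugate i j := by
  by_cases hα : 2 ≤ α.card
  · obtain ⟨J, hJ⟩ := hA.2 α hα
    exact exists_sign_adjugate_of_isSJS_compound hJ
  · exact exists_sign_adjugate_of_isSJS_compound (isSJS_univ_compound_zero _ (by omega))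

theorem isPMatrix (hA : IsSJSK A) : IsPMatrix A := by
  intro α
  by_cases hα : α = Finset.univ
  · exact hα ▸ minorOn_univ A ▸ hA.1
  obtain ⟨x, hx⟩ : ∃ x, x ∉ α := by simpa [Finset.eq_univ_iff_forall] using hα
  -- `minorOn A α α` is a diagonal cofactor of `A(α ∪ {x})`.
  obtain ⟨ε, hε, hadj⟩ := hA.exists_sign_adjugate_psub (insert x α)
  obtain ⟨r, hr⟩ := exists_orderEmbOfFin_eq (Finset.mem_insert_self x α)
  have := hadj r r
  rwa [hε, one_mul, adjugate_psub_apply_self, hr, Finset.erase_insert hx] at this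

theorem isPMatrix_psub (hA : IsSJSK A) (α : Finset (Fin n)) : IsPMatrix (psub A α) :=
  fun s => minorOn_psub_self A α s ▸ hA.isPMatrix _

end IsSJSK

section Positive

variable {ι : Type*} [Fintype ι] {P : Matrix ι ι ℝ}

theorem mulVec_mono_of_nonneg (hP : ∀ i j, 0 ≤ P i j) {x y : ι → ℝ} (hxy : x ≤ y) :
    P *ᵥ x ≤ P *ᵥ y :=
  fun i => dotProduct_le_dotProduct_of_nonneg_left hxy (hP i)

theorem abs_mulVec_le (hP : ∀ i j, 0 ≤ P i j) (x : ι → ℝ) : |P *ᵥ x| ≤ P *ᵥ |x| := fun i => by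
  simp only [Pi.abs_apply, mulVec, dotProduct]
  refine (Finset.abs_sum_le_sum_abs _ _).trans_eq (Finset.sum_congr rfl fun j _ => ?_)
  rw [abs_mul, abs_of_nonneg (hP i j)]

theorem mulVec_apply_pos {i : ι} (hP : ∀ j, 0 < P i j) {x : ι → ℝ} (hx : 0 ≤ x) (hx0 : x ≠ 0) :
    0 < (P *ᵥ x) i := by
  obtain ⟨j, hj⟩ : ∃ j, x j ≠ 0 := by simpa [funext_iff] using hx0
  exact Finset.sum_pos' (fun k _ => mul_nonneg (hP k).le (hx k))
    ⟨j, Finset.mem_univ j, mul_pos (hP j) ((hx j).lt_of_ne' hj)⟩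

theorem le_sum_of_smul_le_mulVec (hP : ∀ i j, 0 ≤ P i j) {x : ι → ℝ} (hx : x ∈ stdSimplex ℝ ι)
    {c : ℝ} (h : c • x ≤ P *ᵥ x) : c ≤ ∑ i, ∑ j, P i j :=
  calc c = ∑ i, c * x i := by rw [← Finset.mul_sum, hx.2, mul_one]
    _ ≤ ∑ i, (P *ᵥ x) i := Finset.sum_le_sum fun i _ => h i
    _ ≤ ∑ i, ∑ j, P i j := Finset.sum_le_sum fun i _ => Finset.sum_le_sum fun j _ =>
        mul_le_of_le_one_right (hP i j) (mem_Icc_of_mem_stdSimplex hx j).2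

theorem exists_gt_smul_le_mulVec [Nonempty ι] (hP : ∀ i j, 0 < P i j) {w : ι → ℝ} {ρ : ℝ}
    (hw : 0 ≤ w) (hw0 : w ≠ 0) (hρw : ρ • w ≤ P *ᵥ w) (hne : P *ᵥ w ≠ ρ • w) :
    ∃ u ∈ stdSimplex ℝ ι, ∃ c, ρ < c ∧ c • u ≤ P *ᵥ u := by
  -- `u = P *ᵥ w` satisfies `ρ • u < P *ᵥ u` strictly, which leaves room for a larger ratio.
  set u := P *ᵥ w
  have hu0 : ∀ i, 0 < u i := fun i => mulVec_apply_pos (hP i) hw hw0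
  have hu : ∀ i, ρ * u i < (P *ᵥ u) i := fun i => by
    have := mulVec_apply_pos (hP i) (sub_nonneg.2 hρw) (sub_ne_zero.2 hne)
    rw [mulVec_sub, mulVec_smul] at this
    simpa using this
  set c := Finset.univ.inf' Finset.univ_nonempty fun i => (P *ᵥ u) i / u i
  have hρc : ρ < c := (Finset.lt_inf'_iff _).2 fun i _ => (lt_div_iff₀ (hu0 i)).2 (hu i)
  have hcu : c • u ≤ P *ᵥ u := fun i =>
    (le_div_iff₀ (hu0 i)).1 (Finset.inf'_le _ (Finset.mem_univ i))
  have hsum : 0 < ∑ i, u i := Finset.sum_pos (fun i _ => hu0 i) Finset.univ_nonempty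
  refine ⟨(∑ i, u i)⁻¹ • u, ⟨fun i => ?_, ?_⟩, c, hρc, ?_⟩
  · simpa using (mul_pos (inv_pos.2 hsum) (hu0 i)).le
  · simp [← Finset.mul_sum, hsum.ne']
  · rw [smul_comm, mulVec_smul]
    exact smul_le_smul_of_nonneg_left hcu (inv_pos.2 hsum).le

theorem exists_pos_mulVec_eq_smul_of_pos [Nonempty ι] (hP : ∀ i j, 0 < P i j) :
    ∃ ρ : ℝ, 0 < ρ ∧ ∃ w : ι → ℝ, (∀ i, 0 < w i) ∧ P *ᵥ w = ρ • w := by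
  classical
  have hP' : ∀ i j, 0 ≤ P i j := fun i j => (hP i j).le
  -- Maximise `c` subject to `c • x ≤ P *ᵥ x` over the standard simplex.
  set T : Set ((ι → ℝ) × ℝ) := (stdSimplex ℝ ι ×ˢ Set.Icc 0 (∑ i, ∑ j, P i j)) ∩
    {p | p.2 • p.1 ≤ P *ᵥ p.1}
  have hT : IsCompact T :=
    ((isCompact_stdSimplex ℝ ι).prod isCompact_Icc).inter_right <| isClosed_le
      (continuous_snd.smul continuous_fst) (continuous_const.matrix_mulVec continuous_fst)
  have hmemT : ∀ x c, x ∈ stdSimplex ℝ ι → 0 ≤ c → c • x ≤ P *ᵥ x → (x, c) ∈ T :=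
    fun x c hx hc h => ⟨⟨hx, hc, le_sum_of_smul_le_mulVec hP' hx h⟩, h⟩
  obtain ⟨i₀⟩ := ‹Nonempty ι›
  have hT0 : (Pi.single i₀ 1, 0) ∈ T := by
    refine hmemT _ 0 (single_mem_stdSimplex ℝ i₀) le_rfl ?_
    simpa using mulVec_mono_of_nonneg hP' (Pi.single_nonneg.2 zero_le_one)
  obtain ⟨⟨w, ρ⟩, ⟨⟨hw, hρ0, -⟩, hwρ⟩, hmax⟩ :=
    hT.exists_isMaxOn ⟨_, hT0⟩ continuous_snd.continuousOn
  have hw0 : w ≠ 0 := fun h => by simpa [h] using hw.2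
  have heig : P *ᵥ w = ρ • w := by
    by_contra hne
    obtain ⟨u, hu, c, hρc, hcu⟩ := exists_gt_smul_le_mulVec hP hw.1 hw0 hwρ hne
    exact hρc.not_ge (hmax (hmemT u c hu (hρ0.trans hρc.le) hcu))
  have hρw : ∀ i, 0 < ρ * w i := fun i => by
    simpa [heig] using mulVec_apply_pos (hP i) hw.1 hw0
  have hρ : 0 < ρ := pos_of_mul_pos_left (hρw i₀) (hw.1 i₀)
  exact ⟨ρ, hρ, w, fun i => pos_of_mul_pos_right (hρw i) hρ.le, heig⟩

end Positive

section LeftEigenvector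

variable {ι : Type*} [Fintype ι] {P : Matrix ι ι ℝ} {v : ι → ℝ} {ρ s : ℝ}

theorem le_of_smul_le_mulVec (hv : ∀ i, 0 < v i) (hvP : v ᵥ* P = ρ • v) {x : ι → ℝ}
    (hx : 0 ≤ x) (hx0 : x ≠ 0) (h : s • x ≤ P *ᵥ x) : s ≤ ρ := by
  have hvx : 0 < v ⬝ᵥ x := by
    obtain ⟨j, hj⟩ : ∃ j, x j ≠ 0 := by simpa [funext_iff] using hx0
    exact Finset.sum_pos' (fun k _ => mul_nonneg (hv k).le (hx k))
      ⟨j, Finset.mem_univ j, mul_pos (hv j) ((hx j).lt_of_ne' hj)⟩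
  refine le_of_mul_le_mul_right ?_ hvx
  calc s * (v ⬝ᵥ x) = v ⬝ᵥ (s • x) := by rw [dotProduct_smul, smul_eq_mul]
    _ ≤ v ⬝ᵥ (P *ᵥ x) := dotProduct_le_dotProduct_of_nonneg_left h fun i => (hv i).le
    _ = ρ * (v ⬝ᵥ x) := by rw [dotProduct_mulVec, hvP, smul_dotProduct, smul_eq_mul]

theorem mulVec_eq_smul_of_smul_le_mulVec (hv : ∀ i, 0 < v i) (hvP : v ᵥ* P = ρ • v)
    (hρs : ρ ≤ s) {x : ι → ℝ} (hx : 0 ≤ x) (h : s • x ≤ P *ᵥ x) : P *ᵥ x = s • x := by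
  have hd : 0 ≤ P *ᵥ x - s • x := sub_nonneg.2 h
  have hvd : v ⬝ᵥ (P *ᵥ x - s • x) ≤ 0 := by
    rw [dotProduct_sub, dotProduct_mulVec, hvP, smul_dotProduct, dotProduct_smul, ← sub_smul,
      smul_eq_mul]
    exact mul_nonpos_of_nonpos_of_nonneg (sub_nonpos.2 hρs)
      (Finset.sum_nonneg fun i _ => mul_nonneg (hv i).le (hx i))
  have hzero := (Finset.sum_eq_zero_iff_of_nonneg fun i _ => mul_nonneg (hv i).le (hd i)).1
    (hvd.antisymm (Finset.sum_nonneg fun i _ => mul_nonneg (hv i).le (hd i)))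
  ext i
  simpa [(hv i).ne', sub_eq_zero] using hzero i (Finset.mem_univ i)

theorem eq_zero_of_smul_le_mulVec (hP : ∀ i j, 0 < P i j) (hv : ∀ i, 0 < v i)
    (hvP : v ᵥ* P = ρ • v) (hρs : ρ ≤ s) {z : ι → ℝ} (h : s • z ≤ P *ᵥ z) {r : ι}
    (hz : z r = 0) : z = 0 := by
  have hP' : ∀ i j, 0 ≤ P i j := fun i j => (hP i j).le
  set x : ι → ℝ := fun i => max (z i) 0
  have hx : 0 ≤ x := fun i => le_max_right _ _
  have hxle : s • x ≤ P *ᵥ x := fun i => by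
    rcases le_total (z i) 0 with hzi | hzi
    · simpa [x, hzi] using mulVec_mono_of_nonneg hP' hx i
    · simpa [x, hzi] using (h i).trans (mulVec_mono_of_nonneg hP' (fun j => le_max_left _ _) i)
  have hx0 : x = 0 := by
    by_contra hx0
    have := mulVec_apply_pos (hP r) hx hx0
    simp [mulVec_eq_smul_of_smul_le_mulVec hv hvP hρs hx hxle, x, hz] at this
  have hz' : 0 ≤ -z := fun i => by simpa [x] using (congrFun hx0 i).le
  by_contra hz0
  have hneg := mulVec_apply_pos (hP r) hz' (neg_ne_zero.2 hz0)
  have hpos := h r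
  simp only [mulVec_neg, Pi.neg_apply, Pi.smul_apply, hz, smul_zero] at hneg hpos
  linarith

theorem eq_zero_of_smul_eq_mulVec_add_mulVec_single [DecidableEq ι] (hP : ∀ i j, 0 < P i j)
    (hv : ∀ i, 0 < v i) (hvP : v ᵥ* P = ρ • v) (hρs : ρ ≤ s) {z : ι → ℝ} {r : ι} {b : ℝ}
    (h : s • z = P *ᵥ z + P *ᵥ Pi.single r b) (hz : z r = 0) : z = 0 := by
  have hi : ∀ i, s * z i = (P *ᵥ z) i + b * P i r := fun i => by
    simpa [mulVec_single] using congrFun h i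
  rcases le_total b 0 with hb | hb
  · refine eq_zero_of_smul_le_mulVec hP hv hvP hρs (fun i => ?_) hz
    have := mul_nonpos_of_nonpos_of_nonneg hb (hP i r).le
    simp only [Pi.smul_apply, smul_eq_mul, hi i]
    linarith
  · refine neg_eq_zero.1
      (eq_zero_of_smul_le_mulVec hP hv hvP hρs (fun i => ?_) (r := r) (by simp [hz]))
    have := mul_nonneg hb (hP i r).le
    simp only [Pi.smul_apply, Pi.neg_apply, smul_eq_mul, mulVec_neg, mul_neg, hi i]
    linarith

end LeftEigenvector

theorem Matrix.exists_mulVec_eq_single_of_adjugate_eq_zero {ι K : Type*} [Fintype ι]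
    [DecidableEq ι] [Field K] {M : Matrix ι ι K} {r : ι} (h : M.adjugate r r = 0) :
    ∃ y, y ≠ 0 ∧ y r = 0 ∧ M *ᵥ y = Pi.single r ((M *ᵥ y) r) := by
  rw [adjugate_apply, ← exists_mulVec_eq_zero_iff] at h
  obtain ⟨y, hy0, hy⟩ := h
  rw [updateRow_mulVec] at hy
  refine ⟨y, hy0, by simpa using congrFun hy r, funext fun i => ?_⟩
  rcases eq_or_ne i r with rfl | hi
  · simp
  · simpa [hi] using congrFun hy i

section SignedInverse

variable {ι : Type*} [Fintype ι] [DecidableEq ι] {B P : Matrix ι ι ℝ} {ε v : ι → ℝ} {ρ t : ℝ}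

-- The hypothesis `P * diagonal ε * B = diagonal ε` below encodes `P = S B⁻¹ S`, `S = diagonal ε`.

theorem diagonal_mulVec_eq_of_mulVec_eq (hPB : P * diagonal ε * B = diagonal ε) {y u : ι → ℝ}
    (h : B *ᵥ y = t • y + u) :
    diagonal ε *ᵥ y = t • P *ᵥ (diagonal ε *ᵥ y) + P *ᵥ (diagonal ε *ᵥ u) := by
  calc diagonal ε *ᵥ y = (P * diagonal ε * B) *ᵥ y := by rw [hPB]
    _ = P *ᵥ (diagonal ε *ᵥ (B *ᵥ y)) := by rw [mulVec_mulVec, mulVec_mulVec, Matrix.mul_assoc]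
    _ = _ := by rw [h, mulVec_add, mulVec_smul, mulVec_add, mulVec_smul]

theorem det_sub_inv_smul_one_eq_zero (hε : ∀ i, ε i ≠ 0) (hPB : P * diagonal ε * B = diagonal ε)
    (hv : v ≠ 0) (hρ : ρ ≠ 0) (hvP : v ᵥ* P = ρ • v) : (B - ρ⁻¹ • 1).det = 0 := by
  rw [← exists_vecMul_eq_zero_iff]
  refine ⟨v ᵥ* diagonal ε, fun h => hv (funext fun i => ?_), ?_⟩
  · simpa [vecMul_diagonal, hε i] using congrFun h i
  · have hB : ρ • (v ᵥ* diagonal ε ᵥ* B) = v ᵥ* diagonal ε :=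
      calc ρ • (v ᵥ* diagonal ε ᵥ* B) = (v ᵥ* P) ᵥ* (diagonal ε * B) := by
            rw [hvP, vecMul_vecMul, smul_vecMul]
        _ = v ᵥ* diagonal ε := by rw [vecMul_vecMul, ← Matrix.mul_assoc, hPB]
    rw [vecMul_sub, vecMul_smul, vecMul_one, sub_eq_zero]
    conv_rhs => rw [← hB, smul_smul, inv_mul_cancel₀ hρ, one_smul]

theorem diagonal_mulVec_ne_zero (hε : ∀ i, ε i ≠ 0) {y : ι → ℝ} (hy : y ≠ 0) :
    diagonal ε *ᵥ y ≠ 0 := fun h => hy <| funext fun i => by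
  simpa [mulVec_diagonal, hε i] using congrFun h i

theorem inv_le_of_det_sub_smul_one_eq_zero (hε : ∀ i, ε i ≠ 0)
    (hPB : P * diagonal ε * B = diagonal ε) (hP : ∀ i j, 0 ≤ P i j) (hv : ∀ i, 0 < v i)
    (hvP : v ᵥ* P = ρ • v) (ht : 0 < t) (h : (B - t • 1).det = 0) : ρ⁻¹ ≤ t := by
  obtain ⟨y, hy0, hy⟩ := exists_mulVec_eq_zero_iff.2 h
  have hBy : B *ᵥ y = t • y + 0 := by
    rwa [sub_mulVec, smul_mulVec, one_mulVec, sub_eq_zero, ← add_zero (t • y)] at hy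
  have hz : t⁻¹ • diagonal ε *ᵥ y = P *ᵥ (diagonal ε *ᵥ y) := by
    have hz := diagonal_mulVec_eq_of_mulVec_eq hPB hBy
    rw [mulVec_zero, mulVec_zero, add_zero] at hz
    conv_lhs => rw [hz, smul_smul, inv_mul_cancel₀ ht.ne', one_smul]
  have habs : t⁻¹ • |diagonal ε *ᵥ y| ≤ P *ᵥ |diagonal ε *ᵥ y| := fun i => by
    simpa [← hz, abs_mul, abs_of_pos (inv_pos.2 ht)] using abs_mulVec_le hP (diagonal ε *ᵥ y) i
  refine inv_le_of_inv_le₀ ht (le_of_smul_le_mulVec hv hvP (abs_nonneg _) ?_ habs)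
  simpa using diagonal_mulVec_ne_zero hε hy0

theorem inv_lt_of_adjugate_sub_smul_one_eq_zero (hε : ∀ i, ε i ≠ 0)
    (hPB : P * diagonal ε * B = diagonal ε) (hP : ∀ i j, 0 < P i j) (hv : ∀ i, 0 < v i)
    (hvP : v ᵥ* P = ρ • v) (ht : 0 < t) {r : ι} (h : (B - t • 1).adjugate r r = 0) :
    ρ⁻¹ < t := by
  by_contra! htρ
  obtain ⟨y, hy0, hyr, hy⟩ := exists_mulVec_eq_single_of_adjugate_eq_zero h
  set c := ((B - t • 1) *ᵥ y) r
  have hBy : B *ᵥ y = t • y + Pi.single r c := by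
    rw [← hy, sub_mulVec, smul_mulVec, one_mulVec, add_sub_cancel]
  have hz : t⁻¹ • diagonal ε *ᵥ y =
      P *ᵥ (diagonal ε *ᵥ y) + P *ᵥ Pi.single r (t⁻¹ * (ε r * c)) := by
    have hz := diagonal_mulVec_eq_of_mulVec_eq hPB hBy
    have hsingle : diagonal ε *ᵥ Pi.single r c = Pi.single r (ε r * c) := by
      ext i
      rcases eq_or_ne i r with rfl | hi <;> simp [mulVec_diagonal, *]
    rw [hsingle] at hz
    conv_lhs => rw [hz, smul_add, smul_smul, inv_mul_cancel₀ ht.ne', one_smul, ← mulVec_smul,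
      ← Pi.single_smul, smul_eq_mul]
  exact diagonal_mulVec_ne_zero hε hy0 <| eq_zero_of_smul_eq_mulVec_add_mulVec_single hP hv hvP
    (le_inv_of_le_inv₀ ht htρ) hz (by simp [mulVec_diagonal, hyr])

end SignedInverse

section SmallestEigenvalue

variable {m : ℕ}

theorem charpoly_isRoot_iff (M : Matrix (Fin m) (Fin m) ℝ) (t : ℝ) :
    M.charpoly.IsRoot t ↔ (M - t • 1).det = 0 := by
  rw [Polynomial.IsRoot.def, eval_charpoly, ← neg_sub, det_neg, scalar_apply,
    ← smul_one_eq_diagonal]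
  simp

theorem lval_eq_coe_of_isLeast {M : Matrix (Fin m) (Fin m) ℝ} {l : ℝ}
    (h : IsLeast {t | (M - t • 1).det = 0} l) : lval M = l := by
  simp only [lval, charpoly_isRoot_iff]
  refine le_antisymm (sInf_le (Or.inr ⟨l, h.1, rfl⟩)) (le_sInf ?_)
  rintro _ (rfl | ⟨t, ht, rfl⟩)
  · exact le_top
  · exact EReal.coe_le_coe_iff.2 (h.2 ht)

theorem coe_lt_lval {M : Matrix (Fin m) (Fin m) ℝ} {l : ℝ}
    (h : ∀ t, (M - t • 1).det = 0 → l < t) : (l : EReal) < lval M := by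
  have hfin : {t | M.charpoly.IsRoot t}.Finite :=
    Polynomial.finite_setOfPred_isRoot M.charpoly_monic.ne_zero
  have hmem : lval M ∈ insert ⊤ ((fun t : ℝ => (t : EReal)) '' {t | M.charpoly.IsRoot t}) :=
    Set.Nonempty.csInf_mem (Set.insert_nonempty _ _) ((hfin.image _).insert ⊤)
  obtain (hl | ⟨t, ht, hl⟩) := hmem
  · exact hl ▸ EReal.coe_lt_top l
  · exact hl ▸ EReal.coe_lt_coe_iff.2 (h t ((charpoly_isRoot_iff M t).1 ht))

theorem exists_lval_eq_and_lt_of_adjugate_eq_zero (hm : 0 < m) {B : Matrix (Fin m) (Fin m) ℝ}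
    (hB : IsPMatrix B) {ε : Fin m → ℝ} (hε : ∀ i, ε i * ε i = 1)
    (hadj : ∀ i j, 0 < ε i * ε j * B.adjugate i j) :
    ∃ l : ℝ, lval B = l ∧ ∀ r t, (B - t • 1).adjugate r r = 0 → l < t := by
  have : Nonempty (Fin m) := ⟨⟨0, hm⟩⟩
  have hdet : 0 < B.det := hB.det_pos
  have hε0 : ∀ i, ε i ≠ 0 := fun i h => by simpa [h] using hε i
  set P := diagonal ε * B⁻¹ * diagonal ε
  have hPB : P * diagonal ε * B = diagonal ε := by
    have hSS : diagonal ε * diagonal ε = 1 := by simp [diagonal_mul_diagonal, hε]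
    calc P * diagonal ε * B = diagonal ε * B⁻¹ * (diagonal ε * diagonal ε) * B := by
          simp only [P, Matrix.mul_assoc]
      _ = diagonal ε := by
          rw [hSS, Matrix.mul_one, Matrix.mul_assoc, nonsing_inv_mul _ hdet.ne'.isUnit,
            Matrix.mul_one]
  have hP : ∀ i j, 0 < P i j := fun i j => by
    have : P i j = B.det⁻¹ * (ε i * ε j * B.adjugate i j) := by
      simp only [P, mul_diagonal, diagonal_mul, inv_def, Matrix.smul_apply, smul_eq_mul,
        Ring.inverse_eq_inv']
      ring
    rw [this]
    exact mul_pos (inv_pos.2 hdet) (hadj i j)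
  obtain ⟨ρ, hρ, v, hv, hvP⟩ := exists_pos_mulVec_eq_smul_of_pos (P := Pᵀ)
    fun i j => hP j i
  rw [mulVec_transpose] at hvP
  have hv0 : v ≠ 0 := fun h => (hv ⟨0, hm⟩).ne' (congrFun h _)
  refine ⟨ρ⁻¹, lval_eq_coe_of_isLeast ⟨det_sub_inv_smul_one_eq_zero hε0 hPB hv0 hρ.ne' hvP,
    fun t ht => ?_⟩, fun r t ht => ?_⟩
  · rcases le_or_gt t 0 with h0 | h0
    · exact absurd ht (hB.sub_smul_one h0).det_pos.ne'
    · exact inv_le_of_det_sub_smul_one_eq_zero hε0 hPB (fun i j => (hP i j).le) hv hvP h0 ht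
  · rcases le_or_gt t 0 with h0 | h0
    · exact absurd ht (adjugate_apply_self (B - t • 1) r ▸ hB.sub_smul_one h0 _).ne'
    · exact inv_lt_of_adjugate_sub_smul_one_eq_zero hε0 hPB hP hv hvP h0 ht

end SmallestEigenvalue

theorem IsSJSK.exists_lval_psub_eq {n : ℕ} {A : Matrix (Fin n) (Fin n) ℝ} (hA : IsSJSK A)
    {α : Finset (Fin n)} (hα : α.Nonempty) :
    ∃ l : ℝ, lval (psub A α) = l ∧ ∀ x ∈ α, (l : EReal) < lval (psub A (α.erase x)) := by
  obtain ⟨ε, hε, hadj⟩ := hA.exists_sign_adjugate_psub α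
  obtain ⟨l, hl, hlt⟩ := exists_lval_eq_and_lt_of_adjugate_eq_zero (Finset.card_pos.2 hα)
    (hA.isPMatrix_psub α) hε hadj
  refine ⟨l, hl, fun x hx => coe_lt_lval fun t ht => ?_⟩
  obtain ⟨r, rfl⟩ := exists_orderEmbOfFin_eq hx
  refine hlt r t ?_
  rwa [← psub_sub_smul_one, adjugate_psub_apply_self, minorOn_self, psub_sub_smul_one]

/-- Every SJSK-matrix is a strict τ-matrix (τ^<-matrix):
`l(A) > 0`, every principal submatrix of `A` has a real eigenvalue, and
`l(A(α)) < l(A(β)) < ∞` whenever `∅ ≠ β ⊊ α ⊆ {1,…,n}`. -/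
theorem sjsk_is_strict_tau {n : ℕ} (A : Matrix (Fin n) (Fin n) ℝ) (hA : IsSJSK A) :
    (0 : EReal) < lval A ∧
    (∀ α : Finset (Fin n), α.Nonempty → lval (psub A α) < ⊤) ∧
    (∀ α β : Finset (Fin n), β.Nonempty → β ⊂ α →
      lval (psub A α) < lval (psub A β) ∧ lval (psub A β) < ⊤) := by
  have hfin : ∀ α : Finset (Fin n), α.Nonempty → lval (psub A α) < ⊤ := fun α hα => by
    obtain ⟨l, hl, -⟩ := hA.exists_lval_psub_eq hα
    exact hl ▸ EReal.coe_lt_top l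
  have hanti : StrictAnti fun α => lval (psub A α) := by
    refine (strictAnti_iff_forall_covBy _).2 fun β α hβα => ?_
    obtain ⟨x, hx, rfl⟩ := Finset.covBy_iff_exists_erase.1 hβα
    obtain ⟨l, hl, hlt⟩ := hA.exists_lval_psub_eq ⟨x, hx⟩
    exact hl ▸ hlt x hx
  have hpos : ((0 : ℝ) : EReal) < lval A := coe_lt_lval fun t ht => by
    by_contra! h0
    exact (hA.isPMatrix.sub_smul_one h0).det_pos.ne' ht
  exact ⟨hpos, hfin, fun α β hβ hβα => ⟨hanti hβα, hfin β hβ⟩⟩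
end

section
/- Let P be the n×n reverse permutation matrix, i.e. the permutation matrix of the permutation i ↦ n+1−i. If A is a K-matrix, then P A P^{−1} is a K-matrix; if A is an SK-matrix, then P A P^{−1} is an SK-matrix. -/
open Matrix

lemma revImage_card {n : ℕ} (α : Finset (Fin n)) :
    (α.image Fin.rev).card = α.card :=
  Finset.card_image_of_injective α Fin.rev_injective

lemma revEmb {n : ℕ} (α : Finset (Fin n)) {k : ℕ} (h : α.card = k)
    (h' : (α.image Fin.rev).card = k) (i : Fin k) :
    (α.image Fin.rev).orderEmbOfFin h' i = Fin.rev (α.orderEmbOfFin h (Fin.rev i)) := by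
  have := Finset.orderEmbOfFin_unique h'
    (f := fun i : Fin k => Fin.rev (α.orderEmbOfFin h (Fin.rev i)))
    (fun x => Finset.mem_image_of_mem _ (Finset.orderEmbOfFin_mem α h _))
    (fun a b hab => by
      simp only [Fin.rev_lt_rev]
      exact (α.orderEmbOfFin h).strictMono (Fin.rev_lt_rev.mpr hab))
  exact (congrFun this i).symm

lemma minorOn_rev {n : ℕ} (A : Matrix (Fin n) (Fin n) ℝ) (α β : Finset (Fin n)) :
    minorOn (A.submatrix Fin.rev Fin.rev) α β
      = minorOn A (α.image Fin.rev) (β.image Fin.rev) := by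
  unfold minorOn
  by_cases h : β.card = α.card
  · have hα := revImage_card α
    have hβ := revImage_card β
    rw [dif_pos h, dif_pos (by rw [hα, hβ, h])]
    have key : ∀ γ : Finset (Fin n), ∀ k (hk : γ.card = k) (hk' : (γ.image Fin.rev).card = k),
        (Fin.rev ∘ ⇑(γ.orderEmbOfFin hk)) =
          (⇑((γ.image Fin.rev).orderEmbOfFin hk') ∘ ⇑(Fin.revPerm (n := k))) := by
      intro γ k hk hk'
      funext i
      simp [revEmb γ hk hk', Fin.revPerm]
    have : (A.submatrix Fin.rev Fin.rev).submatrix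
        (⇑(α.orderEmbOfFin rfl)) (⇑(β.orderEmbOfFin h))
        = ((A.submatrix (⇑((α.image Fin.rev).orderEmbOfFin hα))
            (⇑((β.image Fin.rev).orderEmbOfFin (by rw [hβ, h])))).submatrix
            (⇑(Fin.revPerm (n := α.card))) (⇑(Fin.revPerm (n := α.card)))) := by
      rw [Matrix.submatrix_submatrix, Matrix.submatrix_submatrix,
        key α α.card rfl hα, key β α.card h (by rw [hβ, h])]
    rw [this, Matrix.det_submatrix_equiv_self,
      ← Matrix.det_submatrix_equiv_self (finCongr hα.symm)
        (A.submatrix (⇑((α.image Fin.rev).orderEmbOfFin rfl))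
          (⇑((β.image Fin.rev).orderEmbOfFin (by rw [revImage_card, revImage_card, h]))))]
    rfl
  · rw [dif_neg h, dif_neg (by rw [revImage_card, revImage_card]; exact h)]

lemma conj_eq_rev_submatrix {n : ℕ} (A P : Matrix (Fin n) (Fin n) ℝ)
    (hP : P = Matrix.of fun i j : Fin n => if j = Fin.rev i then (1 : ℝ) else 0) :
    P * A * P⁻¹ = A.submatrix Fin.rev Fin.rev := by
  have hPP : P * P = 1 := by
    subst hP
    ext i j
    simp [Matrix.mul_apply, Finset.sum_ite_eq, Matrix.one_apply, eq_comm (a := j),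
      Fin.rev_rev, Fin.rev_eq_iff]
  have hPinv : P⁻¹ = P := (Matrix.inv_eq_right_inv hPP).symm ▸ rfl
  rw [hPinv]
  subst hP
  ext i j
  simp only [Matrix.of_apply, Matrix.mul_apply, mul_ite, mul_one, mul_zero, ite_mul, one_mul,
    zero_mul]
  simp only [Finset.sum_ite_eq', Finset.mem_univ, if_true]
  have hc : ∀ x : Fin n, (j = x.rev) ↔ (x = j.rev) := fun x => by
    constructor
    · rintro rfl; rw [Fin.rev_rev]
    · rintro rfl; rw [Fin.rev_rev]
  simp only [hc, Finset.sum_ite_eq', Finset.mem_univ, if_true]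
  rfl


/-- Let `P` be the reverse permutation matrix (the permutation
matrix of `i ↦ n + 1 − i`, i.e. `Fin.rev` in 0-indexed terms). If `A` is a K-matrix,
then `P A P⁻¹` is a K-matrix; if `A` is an SK-matrix, then `P A P⁻¹` is an SK-matrix. -/
theorem reverse_perm_conj_K_SK {n : ℕ} (A P : Matrix (Fin n) (Fin n) ℝ)
    (hP : P = Matrix.of fun i j : Fin n => if j = Fin.rev i then (1 : ℝ) else 0) :
    (IsK A → IsK (P * A * P⁻¹)) ∧ (IsSK A → IsSK (P * A * P⁻¹)) := by
  have hM : P * A * P⁻¹ = A.submatrix Fin.rev Fin.rev := conj_eq_rev_submatrix A P hP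
  have main : ∀ α : Finset (Fin n), ∀ r s : Fin n, r ∈ α → s ∈ α → r ≠ s →
      minorOn (P * A * P⁻¹) (α.erase r) (α.erase s)
        = minorOn A ((α.image Fin.rev).erase r.rev) ((α.image Fin.rev).erase s.rev) := by
    intro α r s hr hs hrs
    rw [hM, minorOn_rev, Finset.image_erase Fin.rev_injective,
      Finset.image_erase Fin.rev_injective]
  constructor
  · rintro ⟨h1, h2⟩
    refine ⟨fun α hα => ?_, fun α r s hr hs hrs => ?_⟩
    · rw [hM, minorOn_rev]
      exact h1 _ (hα.image _)
    · rw [main α r s hr hs hrs]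
      exact h2 _ _ _ (Finset.mem_image_of_mem _ hr) (Finset.mem_image_of_mem _ hs)
        (fun he => hrs (Fin.rev_injective he))
  · rintro ⟨h1, h2⟩
    refine ⟨fun α hα => ?_, fun α r s hr hs hrs => ?_⟩
    · rw [hM, minorOn_rev]
      exact h1 _ (hα.image _)
    · rw [main α r s hr hs hrs]
      exact h2 _ _ _ (Finset.mem_image_of_mem _ hr) (Finset.mem_image_of_mem _ hs)
        (fun he => hrs (Fin.rev_injective he))
end

section
/- Let A be an n×n real matrix that is strictly J-sign-symmetric (for some J₁ ⊆ {1,…,n}) and whose second compound matrix A^(2) is also strictly J-sign-symmetric (for some subset of its index set). Then there exist a permutation matrix P and a diagonal matrix D with diagonal entries equal to ±1 such that A = D P Ã Pᵀ D^{−1}, where Ã is an entrywise positive matrix whose second compound matrix Ã^(2) is also entrywise positive. -/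
open Matrix

lemma det_card_two {m : ℕ} (hm : m = 2) (h0 : 0 < m) (h1 : 1 < m)
    (M : Matrix (Fin m) (Fin m) ℝ) :
    M.det = M ⟨0, h0⟩ ⟨0, h0⟩ * M ⟨1, h1⟩ ⟨1, h1⟩ -
      M ⟨0, h0⟩ ⟨1, h1⟩ * M ⟨1, h1⟩ ⟨0, h0⟩ := by
  subst hm
  rw [Matrix.det_fin_two]
  rfl

lemma orderEmbOfFin_pair {n : ℕ} {i j : Fin n} (hij : i < j) {m : ℕ}
    (h : ({i, j} : Finset (Fin n)).card = m) (h0 : 0 < m) (h1 : 1 < m) :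
    ({i, j} : Finset (Fin n)).orderEmbOfFin h ⟨0, h0⟩ = i ∧
    ({i, j} : Finset (Fin n)).orderEmbOfFin h ⟨1, h1⟩ = j := by
  have e0m := Finset.orderEmbOfFin_mem ({i, j} : Finset (Fin n)) h ⟨0, h0⟩
  have e1m := Finset.orderEmbOfFin_mem ({i, j} : Finset (Fin n)) h ⟨1, h1⟩
  have hlt : ({i, j} : Finset (Fin n)).orderEmbOfFin h ⟨0, h0⟩ <
      ({i, j} : Finset (Fin n)).orderEmbOfFin h ⟨1, h1⟩ :=
    (Finset.orderEmbOfFin _ h).strictMono (by simp [Fin.lt_def])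
  simp only [Finset.mem_insert, Finset.mem_singleton] at e0m e1m
  rcases e0m with h0i | h0j <;> rcases e1m with h1i | h1j
  · rw [h0i, h1i] at hlt; exact absurd hlt (lt_irrefl i)
  · exact ⟨h0i, h1j⟩
  · rw [h0j, h1i] at hlt; exact absurd hij (lt_asymm hlt)
  · rw [h0j, h1j] at hlt; exact absurd hlt (lt_irrefl j)

lemma minorOn_pair {n : ℕ} (A : Matrix (Fin n) (Fin n) ℝ) {i j k l : Fin n}
    (hij : i < j) (hkl : k < l) :
    minorOn A {i, j} {k, l} = A i k * A j l - A i l * A j k := by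
  have hs : ({i, j} : Finset (Fin n)).card = 2 := Finset.card_pair hij.ne
  have ht : ({k, l} : Finset (Fin n)).card = 2 := Finset.card_pair hkl.ne
  have hts : ({k, l} : Finset (Fin n)).card = ({i, j} : Finset (Fin n)).card :=
    ht.trans hs.symm
  have h0 : 0 < ({i, j} : Finset (Fin n)).card := by omega
  have h1 : 1 < ({i, j} : Finset (Fin n)).card := by omega
  rw [minorOn, dif_pos hts, det_card_two hs h0 h1]
  obtain ⟨p10, p11⟩ := orderEmbOfFin_pair hij (rfl : ({i,j} : Finset (Fin n)).card = _) h0 h1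
  obtain ⟨p20, p21⟩ := orderEmbOfFin_pair hkl hts h0 h1
  simp only [Matrix.submatrix_apply, p10, p11, p20, p21]

lemma triple_contra {Cxx Cxy Cxz Cyx Cyz Czx Czy Czz : ℝ}
    (pxx : 0 < Cxx) (pxy : 0 < Cxy) (pxz : 0 < Cxz) (pyx : 0 < Cyx)
    (pyz : 0 < Cyz) (pzx : 0 < Czx) (pzy : 0 < Czy) (pzz : 0 < Czz)
    (hm1 : Cxx * Cyz < Cxz * Cyx)
    (hm2 : Cxy * Czz < Cxz * Czy)
    (hm6 : Cxz * Czx < Cxx * Czz)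
    (hm7 : Cxx * Czy < Cxy * Czx)
    (hm8 : Cyx * Czz < Cyz * Czx) : False := by
  have hA' : (Cxx * Cyz) * (Cxy * Czz) < (Cxz * Cyx) * (Cxz * Czy) :=
    mul_lt_mul'' hm1 hm2 (by positivity) (by positivity)
  have hB' : (Cxx * Czy) * (Cyx * Czz) < (Cxy * Czx) * (Cyz * Czx) :=
    mul_lt_mul'' hm7 hm8 (by positivity) (by positivity)
  have t1 : (Cxz * Czx) * (Cyz * Cxy) < (Cxx * Czz) * (Cyz * Cxy) :=
    mul_lt_mul_of_pos_right hm6 (by positivity)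
  have t2 : (Cxz * Czx) * (Czy * Cyx) < (Cxx * Czz) * (Czy * Cyx) :=
    mul_lt_mul_of_pos_right hm6 (by positivity)
  have star0 : Cxz * (Czx * Cyz * Cxy) < Cxz * (Cxz * Cyx * Czy) := by linarith [t1, hA']
  have star : Czx * Cyz * Cxy < Cxz * Cyx * Czy := lt_of_mul_lt_mul_left star0 pxz.le
  have dst0 : Czx * (Cxz * Czy * Cyx) < Czx * (Cxy * Cyz * Czx) := by linarith [t2, hB']
  have dstar : Cxz * Czy * Cyx < Cxy * Cyz * Czx := lt_of_mul_lt_mul_left dst0 pzx.le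
  linarith [star, dstar]

lemma exists_sorting_perm {n : ℕ} (r : Fin n → Fin n → Prop)
    (htot : ∀ i j, i ≠ j → r i j ∨ r j i)
    (hasymm : ∀ i j, r i j → ¬ r j i)
    (htrans : ∀ a b c, r a b → r b c → r a c) :
    ∃ σ : Equiv.Perm (Fin n), ∀ p q, p < q → r (σ p) (σ q) := by
  classical
  let r' : Fin n → Fin n → Prop := fun i j => i = j ∨ r i j
  haveI : DecidableRel r' := fun a b => Classical.propDecidable _
  haveI : IsTrans (Fin n) r' := by
    constructor
    rintro a b c (rfl | hab) (rfl | hbc)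
    · exact Or.inl rfl
    · exact Or.inr hbc
    · exact Or.inr hab
    · exact Or.inr (htrans _ _ _ hab hbc)
  haveI : IsAntisymm (Fin n) r' := by
    constructor
    rintro a b (rfl | hab) h2
    · rfl
    · rcases h2 with rfl | hba
      · rfl
      · exact absurd hba (hasymm _ _ hab)
  haveI : IsTotal (Fin n) r' := by
    constructor
    intro a b
    by_cases h : a = b
    · exact Or.inl (Or.inl h)
    · rcases htot a b h with h' | h'
      · exact Or.inl (Or.inr h')
      · exact Or.inr (Or.inr h')
  set l := Finset.univ.sort r' with hl
  have hlen : l.length = n := by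
    rw [hl, Finset.length_sort, Finset.card_univ, Fintype.card_fin]
  have hnd : l.Nodup := Finset.sort_nodup _ _
  have hsort : l.Pairwise r' := Finset.pairwise_sort _ _
  let f : Fin n → Fin n := fun p => l.get (Fin.cast hlen.symm p)
  have hinj : Function.Injective f := by
    intro a b hab
    have h := (List.nodup_iff_injective_get.mp hnd) hab
    have := congrArg Fin.val h
    exact Fin.ext this
  have hbij : Function.Bijective f := Finite.injective_iff_bijective.mp hinj
  refine ⟨Equiv.ofBijective f hbij, ?_⟩
  intro p q hpq
  have h1 : r' (f p) (f q) := hsort.rel_get_of_lt (by simp only [Fin.lt_def, Fin.coe_cast]; exact hpq)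
  rcases h1 with h1 | h1
  · exact absurd (hinj h1) (ne_of_lt hpq)
  · exact h1

/-- Let `A` be strictly J-sign-symmetric (for some `J₁`) and let its
second compound matrix `A⁽²⁾` also be strictly J-sign-symmetric (for some subset `J₂`
of its index set). Then there are a permutation matrix `P` (of a permutation `σ`)
and a diagonal matrix `D` with diagonal entries `±1` such that
`A = D P B Pᵀ D⁻¹`, where `B` is entrywise positive and its second compound `B⁽²⁾`
is also entrywise positive. -/
theorem sjs_second_compound_positivization {n : ℕ} (A : Matrix (Fin n) (Fin n) ℝ)
    (J₁ : Set (Fin n)) (hA : IsSJS J₁ A)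
    (J₂ : Set {s : Finset (Fin n) // s.card = 2}) (hA2 : IsSJS J₂ (compound A 2)) :
    ∃ (σ : Equiv.Perm (Fin n)) (d : Fin n → ℝ) (B : Matrix (Fin n) (Fin n) ℝ),
      (∀ i, d i = 1 ∨ d i = -1) ∧
      (∀ i j, 0 < B i j) ∧ (∀ s t, 0 < compound B 2 s t) ∧
      A = Matrix.diagonal d
            * (Matrix.of fun i j : Fin n => if σ j = i then (1 : ℝ) else 0)
            * B
            * (Matrix.of fun i j : Fin n => if σ j = i then (1 : ℝ) else 0)ᵀ
            * (Matrix.diagonal d)⁻¹ := by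
  classical
  set d : Fin n → ℝ := fun i => if i ∈ J₁ then 1 else -1 with hd_def
  have hd1 : ∀ i, d i = 1 ∨ d i = -1 := by
    intro i; by_cases h : i ∈ J₁ <;> simp [hd_def, h]
  have hd2 : ∀ i, d i * d i = 1 := by
    intro i; rcases hd1 i with h | h <;> rw [h] <;> norm_num
  have hC : ∀ a b, 0 < d a * A a b * d b := by
    intro a b
    have hne := hA.2 a b
    by_cases ha : a ∈ J₁ <;> by_cases hb : b ∈ J₁
    · have hle := hA.1.1 a b (Or.inl ⟨ha, hb⟩)
      have : 0 < A a b := lt_of_le_of_ne hle (Ne.symm hne)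
      simp only [hd_def, if_pos ha, if_pos hb]; linarith
    · have hle := hA.1.2 a b (Or.inl ⟨ha, hb⟩)
      have : A a b < 0 := lt_of_le_of_ne hle hne
      simp only [hd_def, if_pos ha, if_neg hb]; linarith
    · have hle := hA.1.2 a b (Or.inr ⟨ha, hb⟩)
      have : A a b < 0 := lt_of_le_of_ne hle hne
      simp only [hd_def, if_neg ha, if_pos hb]; linarith
    · have hle := hA.1.1 a b (Or.inr ⟨ha, hb⟩)
      have : 0 < A a b := lt_of_le_of_ne hle (Ne.symm hne)
      simp only [hd_def, if_neg ha, if_neg hb]; linarith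
  set χ : Finset (Fin n) → ℝ := fun s =>
    if h : s.card = 2 then
      (if (⟨s, h⟩ : {s : Finset (Fin n) // s.card = 2}) ∈ J₂ then 1 else -1)
    else 1 with hχ_def
  set F : Fin n → Fin n → ℝ := fun i j => χ {i, j} * (d i * d j) with hF_def
  have hFsymm : ∀ i j, F i j = F j i := by
    intro i j
    simp only [hF_def]
    rw [Finset.pair_comm i j, mul_comm (d i)]
  have hFval : ∀ i j, i ≠ j → F i j = 1 ∨ F i j = -1 := by
    intro i j h
    have hχv : χ {i, j} = 1 ∨ χ {i, j} = -1 := by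
      simp only [hχ_def]
      rw [dif_pos (Finset.card_pair h)]
      split <;> simp
    simp only [hF_def]
    rcases hχv with h1 | h1 <;> rcases hd1 i with h2 | h2 <;> rcases hd1 j with h3 | h3 <;>
      rw [h1, h2, h3] <;> norm_num
  have hpos : ∀ i j k l : Fin n, i < j → k < l →
      0 < F i j * F k l *
        ((d i * A i k * d k) * (d j * A j l * d l) -
         (d i * A i l * d l) * (d j * A j k * d k)) := by
    intro i j k l hij hkl
    set u : {s : Finset (Fin n) // s.card = 2} := ⟨{i, j}, Finset.card_pair hij.ne⟩ with hu
    set v : {s : Finset (Fin n) // s.card = 2} := ⟨{k, l}, Finset.card_pair hkl.ne⟩ with hv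
    have hcomp : compound A 2 u v = A i k * A j l - A i l * A j k := minorOn_pair A hij hkl
    have hχu : χ {i, j} = if u ∈ J₂ then 1 else -1 := by
      simp only [hχ_def]; rw [dif_pos (Finset.card_pair hij.ne)]
    have hχv : χ {k, l} = if v ∈ J₂ then 1 else -1 := by
      simp only [hχ_def]; rw [dif_pos (Finset.card_pair hkl.ne)]
    have hne := hA2.2 u v
    have hsgn : 0 < χ {i, j} * χ {k, l} * (A i k * A j l - A i l * A j k) := by
      rw [hχu, hχv, ← hcomp]
      by_cases hu2 : u ∈ J₂ <;> by_cases hv2 : v ∈ J₂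
      · have hle := hA2.1.1 u v (Or.inl ⟨hu2, hv2⟩)
        have := lt_of_le_of_ne hle (Ne.symm hne)
        rw [if_pos hu2, if_pos hv2]; linarith
      · have hle := hA2.1.2 u v (Or.inl ⟨hu2, hv2⟩)
        have := lt_of_le_of_ne hle hne
        rw [if_pos hu2, if_neg hv2]; linarith
      · have hle := hA2.1.2 u v (Or.inr ⟨hu2, hv2⟩)
        have := lt_of_le_of_ne hle hne
        rw [if_neg hu2, if_pos hv2]; linarith
      · have hle := hA2.1.1 u v (Or.inr ⟨hu2, hv2⟩)
        have := lt_of_le_of_ne hle (Ne.symm hne)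
        rw [if_neg hu2, if_neg hv2]; linarith
    have key : F i j * F k l *
        ((d i * A i k * d k) * (d j * A j l * d l) -
         (d i * A i l * d l) * (d j * A j k * d k)) =
        χ {i, j} * χ {k, l} * (A i k * A j l - A i l * A j k) := by
      simp only [hF_def]
      linear_combination
        (χ {i, j} * χ {k, l} * (A i k * A j l - A i l * A j k) *
          (d j * d j * (d k * d k) * (d l * d l))) * hd2 i +
        (χ {i, j} * χ {k, l} * (A i k * A j l - A i l * A j k) *
          ((d k * d k) * (d l * d l))) * hd2 j +
        (χ {i, j} * χ {k, l} * (A i k * A j l - A i l * A j k) * (d l * d l)) * hd2 k +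
        (χ {i, j} * χ {k, l} * (A i k * A j l - A i l * A j k)) * hd2 l
    rw [key]
    exact hsgn
  have hT : ∀ x y z : Fin n, x < y → y < z → F x y = F y z → F x z = F x y := by
    intro x y z hxy hyz hEq
    have hxz := hxy.trans hyz
    by_contra hne
    have I1 := hpos x y x z hxy hxz
    have I2 := hpos x z y z hxz hyz
    have I6 := hpos x z x z hxz hxz
    have I7 := hpos x z x y hxz hxy
    have I8 := hpos y z x z hyz hxz
    have hyzval : F y z = F x y := hEq.symm
    rcases hFval x y hxy.ne with h1 | h1 <;> rcases hFval x z hxz.ne with h2 | h2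
    · exact hne (h2.trans h1.symm)
    · rw [hyzval] at I2 I8
      rw [h1] at I1 I2 I7 I8
      rw [h2] at I1 I2 I6 I7 I8
      exact triple_contra (hC x x) (hC x y) (hC x z) (hC y x) (hC y z)
        (hC z x) (hC z y) (hC z z)
        (by linarith) (by linarith) (by linarith) (by linarith) (by linarith)
    · rw [hyzval] at I2 I8
      rw [h1] at I1 I2 I7 I8
      rw [h2] at I1 I2 I6 I7 I8
      exact triple_contra (hC x x) (hC x y) (hC x z) (hC y x) (hC y z)
        (hC z x) (hC z y) (hC z z)
        (by linarith) (by linarith) (by linarith) (by linarith) (by linarith)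
    · exact hne (h2.trans h1.symm)
  set r : Fin n → Fin n → Prop :=
    fun i j => (i < j ∧ F i j = 1) ∨ (j < i ∧ F i j = -1) with hr_def
  have hirr : ∀ i, ¬ r i i := by
    rintro i (⟨h, _⟩ | ⟨h, _⟩) <;> exact lt_irrefl _ h
  have hrAsymm : ∀ i j, r i j → ¬ r j i := by
    rintro i j (⟨hlt, hF⟩ | ⟨hlt, hF⟩) (⟨hlt', hF'⟩ | ⟨hlt', hF'⟩)
    · exact lt_asymm hlt hlt'
    · rw [hFsymm j i, hF] at hF'; norm_num at hF'
    · rw [hFsymm j i, hF] at hF'; norm_num at hF'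
    · exact lt_asymm hlt hlt'
  have hrTotal : ∀ i j, i ≠ j → r i j ∨ r j i := by
    intro i j h
    rcases lt_or_gt_of_ne h with hlt | hlt
    · rcases hFval i j h with hF | hF
      · exact Or.inl (Or.inl ⟨hlt, hF⟩)
      · exact Or.inr (Or.inr ⟨hlt, (hFsymm j i).trans hF⟩)
    · rcases hFval j i (Ne.symm h) with hF | hF
      · exact Or.inr (Or.inl ⟨hlt, hF⟩)
      · exact Or.inl (Or.inr ⟨hlt, (hFsymm i j).trans hF⟩)
  have noCyc1 : ∀ {x y z : Fin n}, x < y → y < z → r x y → r y z → r z x → False := by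
    intro x y z hxy hyz h1 h2 h3
    have hFxy : F x y = 1 := by
      rcases h1 with ⟨_, h⟩ | ⟨h', _⟩
      · exact h
      · exact absurd h' (lt_asymm hxy)
    have hFyz : F y z = 1 := by
      rcases h2 with ⟨_, h⟩ | ⟨h', _⟩
      · exact h
      · exact absurd h' (lt_asymm hyz)
    have hFxz : F x z = 1 := (hT x y z hxy hyz (hFxy.trans hFyz.symm)).trans hFxy
    rcases h3 with ⟨h', _⟩ | ⟨_, hF⟩
    · exact absurd h' (lt_asymm (hxy.trans hyz))
    · rw [hFsymm z x, hFxz] at hF; norm_num at hF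
  have noCyc2 : ∀ {x y z : Fin n}, x < y → y < z → r x z → r z y → r y x → False := by
    intro x y z hxy hyz h1 h2 h3
    have hFyz : F y z = -1 := by
      rcases h2 with ⟨h', _⟩ | ⟨_, h⟩
      · exact absurd h' (lt_asymm hyz)
      · rw [hFsymm y z]; exact h
    have hFxy : F x y = -1 := by
      rcases h3 with ⟨h', _⟩ | ⟨_, h⟩
      · exact absurd h' (lt_asymm hxy)
      · rw [hFsymm x y]; exact h
    have hFxz : F x z = -1 := (hT x y z hxy hyz (hFxy.trans hFyz.symm)).trans hFxy
    rcases h1 with ⟨_, h⟩ | ⟨h', _⟩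
    · rw [hFxz] at h; norm_num at h
    · exact absurd h' (lt_asymm (hxy.trans hyz))
  have noCycGen : ∀ a b c : Fin n, r a b → r b c → r c a → False := by
    intro a b c h1 h2 h3
    rcases lt_trichotomy a b with h_ab | h_ab | h_ab
    · rcases lt_trichotomy b c with h_bc | h_bc | h_bc
      · exact noCyc1 h_ab h_bc h1 h2 h3
      · subst h_bc; exact hirr b h2
      · rcases lt_trichotomy a c with h_ac | h_ac | h_ac
        · exact noCyc2 h_ac h_bc h1 h2 h3
        · subst h_ac; exact hirr a h3
        · exact noCyc1 h_ac h_ab h3 h1 h2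
    · subst h_ab; exact hirr a h1
    · rcases lt_trichotomy b c with h_bc | h_bc | h_bc
      · rcases lt_trichotomy a c with h_ac | h_ac | h_ac
        · exact noCyc2 h_ab h_ac h2 h3 h1
        · subst h_ac; exact hirr a h3
        · exact noCyc1 h_bc h_ac h2 h3 h1
      · subst h_bc; exact hirr b h2
      · exact noCyc2 h_bc h_ab h3 h1 h2
  have hrTrans : ∀ a b c, r a b → r b c → r a c := by
    intro a b c h1 h2
    by_cases hac : a = c
    · subst hac; exact (hrAsymm _ _ h1 h2).elim
    rcases hrTotal a c hac with h | h
    · exact h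
    · exact (noCycGen a b c h1 h2 h).elim
  obtain ⟨σ, hσ⟩ := exists_sorting_perm r hrTotal hrAsymm hrTrans
  refine ⟨σ, d, Matrix.of (fun i j => d (σ i) * A (σ i) (σ j) * d (σ j)), hd1, ?_, ?_, ?_⟩
  · intro i j
    exact hC (σ i) (σ j)
  · intro s t
    obtain ⟨p, q, hpq, hs⟩ : ∃ p q, p < q ∧ s.1 = {p, q} := by
      obtain ⟨a, b, hab, h⟩ := Finset.card_eq_two.mp s.2
      rcases lt_or_gt_of_ne hab with h' | h'
      · exact ⟨a, b, h', h⟩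
      · exact ⟨b, a, h', h.trans (Finset.pair_comm a b)⟩
    obtain ⟨w, v, hwv, ht⟩ : ∃ w v, w < v ∧ t.1 = {w, v} := by
      obtain ⟨a, b, hab, h⟩ := Finset.card_eq_two.mp t.2
      rcases lt_or_gt_of_ne hab with h' | h'
      · exact ⟨a, b, h', h⟩
      · exact ⟨b, a, h', h.trans (Finset.pair_comm a b)⟩
    have hct : compound (Matrix.of (fun i j => d (σ i) * A (σ i) (σ j) * d (σ j))) 2 s t =
        minorOn (Matrix.of (fun i j => d (σ i) * A (σ i) (σ j) * d (σ j))) s.1 t.1 := rfl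
    rw [hct, hs, ht, minorOn_pair _ hpq hwv]
    simp only [Matrix.of_apply]
    have h1 := hσ p q hpq
    have h2 := hσ w v hwv
    rcases h1 with ⟨h1lt, h1F⟩ | ⟨h1lt, h1F⟩ <;> rcases h2 with ⟨h2lt, h2F⟩ | ⟨h2lt, h2F⟩
    · have := hpos (σ p) (σ q) (σ w) (σ v) h1lt h2lt
      rw [h1F, h2F] at this; linarith
    · have := hpos (σ p) (σ q) (σ v) (σ w) h1lt h2lt
      rw [h1F, (hFsymm (σ v) (σ w)).trans h2F] at this; linarith
    · have := hpos (σ q) (σ p) (σ w) (σ v) h1lt h2lt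
      rw [(hFsymm (σ q) (σ p)).trans h1F, h2F] at this; linarith
    · have := hpos (σ q) (σ p) (σ v) (σ w) h1lt h2lt
      rw [(hFsymm (σ q) (σ p)).trans h1F, (hFsymm (σ v) (σ w)).trans h2F] at this; linarith
  · have hDinv : (Matrix.diagonal d)⁻¹ = Matrix.diagonal d := by
      apply Matrix.inv_eq_right_inv
      rw [Matrix.diagonal_mul_diagonal]
      have hone : (fun i => d i * d i) = fun _ => (1 : ℝ) := funext hd2
      rw [hone, Matrix.diagonal_one]
    rw [hDinv]
    have hPM : ∀ M : Matrix (Fin n) (Fin n) ℝ,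
        (Matrix.of fun i j : Fin n => if σ j = i then (1 : ℝ) else 0) * M =
        M.submatrix (⇑σ.symm) id := by
      intro M
      ext i j
      rw [Matrix.mul_apply]
      rw [Finset.sum_eq_single (σ.symm i)]
      · simp
      · intro b _ hb
        have hbne : ¬ (σ b = i) := fun h => hb (by rw [← h]; simp)
        simp [hbne]
      · intro h; exact absurd (Finset.mem_univ _) h
    have hMP : ∀ M : Matrix (Fin n) (Fin n) ℝ,
        M * (Matrix.of fun i j : Fin n => if σ j = i then (1 : ℝ) else 0)ᵀ =
        M.submatrix id (⇑σ.symm) := by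
      intro M
      ext i j
      rw [Matrix.mul_apply]
      rw [Finset.sum_eq_single (σ.symm j)]
      · simp
      · intro b _ hb
        have hbne : ¬ (σ b = j) := fun h => hb (by rw [← h]; simp)
        simp [hbne]
      · intro h; exact absurd (Finset.mem_univ _) h
    rw [Matrix.mul_assoc (Matrix.diagonal d)
      (Matrix.of fun i j : Fin n => if σ j = i then (1 : ℝ) else 0) _, hPM, hMP]
    ext i j
    simp only [Matrix.mul_diagonal, Matrix.submatrix_apply, Matrix.diagonal_mul,
      Matrix.of_apply, id_eq, Equiv.apply_symm_apply]
    linear_combination (-(A i j * (d j * d j))) * hd2 i + (-(A i j)) * hd2 j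
end

section
/- If A is a K-matrix, then for every permutation matrix P and every nonsingular diagonal matrix D, the matrix P D A D^{−1} P^{−1} is a JSK-matrix; if A is an SK-matrix, then P D A D^{−1} P^{−1} is an SJSK-matrix. -/
open Matrix

/-- Two `orderEmbOfFin`s of the same set agree up to a `Fin` cast. -/
lemma orderEmbOfFin_cast {n k k' : ℕ} (s : Finset (Fin n)) (h : s.card = k) (h' : s.card = k')
    (p : Fin k) : s.orderEmbOfFin h p = s.orderEmbOfFin h' (finCongr (h.symm.trans h') p) := by
  have : (fun p : Fin k => s.orderEmbOfFin h' (finCongr (h.symm.trans h') p)) =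
      ⇑(s.orderEmbOfFin h) := by
    apply Finset.orderEmbOfFin_unique h (fun x => s.orderEmbOfFin_mem h' _)
    exact (s.orderEmbOfFin h').strictMono.comp (fun a b hab => hab)
  exact (congrFun this p).symm

/-- `minorOn` expressed with arbitrary cardinality proofs. -/
lemma minorOn_eq {n k : ℕ} (A : Matrix (Fin n) (Fin n) ℝ) (α β : Finset (Fin n))
    (h1 : α.card = k) (h2 : β.card = k) :
    minorOn A α β = (A.submatrix (⇑(α.orderEmbOfFin h1)) (⇑(β.orderEmbOfFin h2))).det := by
  rw [minorOn, dif_pos (h2.trans h1.symm)]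
  have hr : ⇑(α.orderEmbOfFin h1) = ⇑(α.orderEmbOfFin rfl) ∘ ⇑(finCongr h1.symm) := by
    funext p; exact orderEmbOfFin_cast α h1 rfl p
  have hc : ⇑(β.orderEmbOfFin h2) = ⇑(β.orderEmbOfFin (h2.trans h1.symm)) ∘ ⇑(finCongr h1.symm) := by
    funext p; exact orderEmbOfFin_cast β h2 (h2.trans h1.symm) p
  rw [hr, hc, ← Matrix.submatrix_submatrix]
  rw [Matrix.det_submatrix_equiv_self (finCongr h1.symm)]

lemma image_orderEmbOfFin {n m : ℕ} (s : Finset (Fin n)) (h : s.card = m) :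
    Finset.image (⇑(s.orderEmbOfFin h)) Finset.univ = s := by
  apply Finset.eq_of_subset_of_card_le
  · intro x hx
    obtain ⟨p, -, rfl⟩ := Finset.mem_image.1 hx
    exact s.orderEmbOfFin_mem h p
  · rw [Finset.card_image_of_injective _ (s.orderEmbOfFin h).injective, Finset.card_univ,
      Fintype.card_fin, h]

lemma prod_orderEmbOfFin {n m : ℕ} (s : Finset (Fin n)) (h : s.card = m) (f : Fin n → ℝ) :
    (∏ p : Fin m, f (s.orderEmbOfFin h p)) = ∏ i ∈ s, f i := by
  conv_rhs => rw [← image_orderEmbOfFin s h]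
  rw [Finset.prod_image (fun a _ b _ hab => (s.orderEmbOfFin h).injective hab)]

lemma exists_sort_perm {n m : ℕ} (u : Fin m → Fin n) (hu : Function.Injective u)
    (t : Finset (Fin n)) (ht : t.card = m) (himg : ∀ p, u p ∈ t) :
    ∃ ρ : Equiv.Perm (Fin m), ∀ p, u p = t.orderEmbOfFin ht (ρ p) := by
  have hcard : Fintype.card (Fin m) = Fintype.card t := by
    rw [Fintype.card_fin, Fintype.card_coe, ht]
  set u' : Fin m → t := fun p => ⟨u p, himg p⟩ with hu'
  set e' : Fin m → t := fun p => ⟨t.orderEmbOfFin ht p, t.orderEmbOfFin_mem ht p⟩ with he'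
  have hu'b : Function.Bijective u' := (Fintype.bijective_iff_injective_and_card u').2
    ⟨fun a b hab => hu (congrArg Subtype.val hab), hcard⟩
  have he'b : Function.Bijective e' := (Fintype.bijective_iff_injective_and_card e').2
    ⟨fun a b hab => (t.orderEmbOfFin ht).injective (congrArg Subtype.val hab), hcard⟩
  refine ⟨(Equiv.ofBijective u' hu'b).trans (Equiv.ofBijective e' he'b).symm, fun p => ?_⟩
  have h1 : (Equiv.ofBijective e' he'b) ((Equiv.ofBijective e' he'b).symm (u' p)) = u' p :=
    Equiv.apply_symm_apply _ _
  have h2 : e' ((Equiv.ofBijective e' he'b).symm (u' p)) = u' p := h1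
  exact (congrArg Subtype.val h2).symm

/-- The permutation sorting `π ∘ orderEmbOfFin γ` into the enumeration of `γ.image π`. -/
noncomputable def sortPerm {n : ℕ} (π : Equiv.Perm (Fin n)) (γ : Finset (Fin n)) :
    Equiv.Perm (Fin γ.card) :=
  Classical.choose (exists_sort_perm (⇑π ∘ ⇑(γ.orderEmbOfFin rfl))
    (π.injective.comp (γ.orderEmbOfFin rfl).injective)
    (γ.image ⇑π) (Finset.card_image_of_injective γ π.injective)
    (fun p => Finset.mem_image_of_mem _ (γ.orderEmbOfFin_mem rfl p)))

lemma sortPerm_spec {n : ℕ} (π : Equiv.Perm (Fin n)) (γ : Finset (Fin n)) (p : Fin γ.card) :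
    π (γ.orderEmbOfFin rfl p) = (γ.image ⇑π).orderEmbOfFin
      (Finset.card_image_of_injective γ π.injective) (sortPerm π γ p) :=
  Classical.choose_spec (exists_sort_perm (⇑π ∘ ⇑(γ.orderEmbOfFin rfl))
    (π.injective.comp (γ.orderEmbOfFin rfl).injective)
    (γ.image ⇑π) (Finset.card_image_of_injective γ π.injective)
    (fun p => Finset.mem_image_of_mem _ (γ.orderEmbOfFin_mem rfl p))) p

/-- The weight `ε(γ) ∏_{i∈γ} δ i` used in the minor transformation formula. -/
noncomputable def wght {n : ℕ} (π : Equiv.Perm (Fin n)) (δ : Fin n → ℝ)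
    (γ : Finset (Fin n)) : ℝ :=
  ((Equiv.Perm.sign (sortPerm π γ) : ℤ) : ℝ) * ∏ i ∈ γ, δ i

lemma sign_cases {m : ℕ} (ρ : Equiv.Perm (Fin m)) :
    ((Equiv.Perm.sign ρ : ℤ) : ℝ) = 1 ∨ ((Equiv.Perm.sign ρ : ℤ) : ℝ) = -1 := by
  rcases Int.units_eq_one_or (Equiv.Perm.sign ρ) with h | h <;> rw [h] <;> simp

lemma wght_ne_zero {n : ℕ} (π : Equiv.Perm (Fin n)) (δ : Fin n → ℝ) (hδ : ∀ i, δ i ≠ 0)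
    (γ : Finset (Fin n)) : wght π δ γ ≠ 0 := by
  unfold wght
  refine mul_ne_zero ?_ (Finset.prod_ne_zero_iff.2 fun i _ => hδ i)
  rcases sign_cases (sortPerm π γ) with h | h <;> rw [h] <;> norm_num

lemma detM {n k : ℕ} (A : Matrix (Fin n) (Fin n) ℝ) (π : Equiv.Perm (Fin n)) (δ : Fin n → ℝ)
    (f g : Fin k → Fin n) :
    ((Matrix.of fun i j => δ i * A (π i) (π j) * (δ j)⁻¹).submatrix f g).det
      = (∏ p, δ (f p)) * (∏ q, (δ (g q))⁻¹) * (A.submatrix (⇑π ∘ f) (⇑π ∘ g)).det := by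
  have h1 : (Matrix.of fun i j => δ i * A (π i) (π j) * (δ j)⁻¹).submatrix f g
      = Matrix.of (fun p q => (fun r => δ (f r)) p *
          (Matrix.of fun p' q' => (fun r => (δ (g r))⁻¹) q' *
            (A.submatrix (⇑π ∘ f) (⇑π ∘ g)) p' q') p q) := by
    ext p q
    simp only [Matrix.submatrix_apply, Matrix.of_apply, Function.comp_apply]
    ring
  rw [h1, Matrix.det_mul_column, Matrix.det_mul_row]
  ring

lemma detP {k : ℕ} (M : Matrix (Fin k) (Fin k) ℝ) (ρ τ : Equiv.Perm (Fin k)) :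
    (M.submatrix (⇑ρ) (⇑τ)).det
      = ((Equiv.Perm.sign ρ : ℤ) : ℝ) * ((Equiv.Perm.sign τ : ℤ) : ℝ) * M.det := by
  have h : M.submatrix (⇑ρ) (⇑τ) = (M.submatrix id ⇑τ).submatrix ⇑ρ id := by
    rw [Matrix.submatrix_submatrix]; rfl
  rw [h, Matrix.det_permute, Matrix.det_permute']
  ring

/-- Key transformation formula for minors under monomial conjugation. -/
lemma minor_transform {n : ℕ} (A : Matrix (Fin n) (Fin n) ℝ) (π : Equiv.Perm (Fin n))
    (δ : Fin n → ℝ) (α β : Finset (Fin n)) (hc : β.card = α.card) :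
    minorOn (Matrix.of fun i j => δ i * A (π i) (π j) * (δ j)⁻¹) α β
      = wght π δ α * (wght π δ β)⁻¹ * minorOn A (α.image ⇑π) (β.image ⇑π) := by
  set k := α.card with hk
  have himα : (α.image ⇑π).card = α.card := Finset.card_image_of_injective α π.injective
  have himβ : (β.image ⇑π).card = β.card := Finset.card_image_of_injective β π.injective
  -- left side
  rw [minorOn_eq _ α β rfl hc, detM]
  -- the row function
  have hrow : ⇑π ∘ ⇑(α.orderEmbOfFin rfl)
      = ⇑((α.image ⇑π).orderEmbOfFin himα) ∘ ⇑(sortPerm π α) := by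
    funext p; exact sortPerm_spec π α p
  -- the column function
  set ρβ : Equiv.Perm (Fin k) := (finCongr hc).permCongr (sortPerm π β) with hρβ
  have hcol : ⇑π ∘ ⇑(β.orderEmbOfFin hc)
      = ⇑((β.image ⇑π).orderEmbOfFin (himβ.trans hc)) ∘ ⇑ρβ := by
    funext p
    simp only [Function.comp_apply, hρβ, Equiv.permCongr_apply]
    rw [orderEmbOfFin_cast β hc rfl p, sortPerm_spec π β,
      orderEmbOfFin_cast (β.image ⇑π) himβ (himβ.trans hc)]
    rfl
  rw [hrow, hcol, ← Matrix.submatrix_submatrix, detP,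
    ← minorOn_eq A (α.image ⇑π) (β.image ⇑π) himα (himβ.trans hc)]
  have hsρβ : ((Equiv.Perm.sign ρβ : ℤ) : ℝ) = ((Equiv.Perm.sign (sortPerm π β) : ℤ) : ℝ) := by
    rw [hρβ, Equiv.Perm.sign_permCongr]
  have hpa : (∏ p : Fin k, δ (α.orderEmbOfFin rfl p)) = ∏ i ∈ α, δ i :=
    prod_orderEmbOfFin α rfl δ
  have hpb : (∏ q : Fin k, (δ (β.orderEmbOfFin hc q))⁻¹) = (∏ i ∈ β, δ i)⁻¹ := by
    rw [prod_orderEmbOfFin β hc (fun i => (δ i)⁻¹), Finset.prod_inv_distrib]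
  rw [hsρβ, hpa, hpb]
  unfold wght
  rcases sign_cases (sortPerm π α) with h1 | h1 <;>
    rcases sign_cases (sortPerm π β) with h2 | h2 <;>
      rw [h1, h2] <;> simp <;> ring

lemma minorOn_univ_s18 {n : ℕ} (M : Matrix (Fin n) (Fin n) ℝ) :
    minorOn M Finset.univ Finset.univ = M.det := by
  rw [minorOn, dif_pos rfl]
  have hb : Function.Bijective ⇑(Finset.univ.orderEmbOfFin (rfl : (Finset.univ : Finset (Fin n)).card = _)) := by
    refine (Fintype.bijective_iff_injective_and_card _).2
      ⟨(Finset.univ.orderEmbOfFin rfl).injective, ?_⟩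
    rw [Fintype.card_fin, Fintype.card_fin, Finset.card_univ, Fintype.card_fin]
  have : ⇑(Finset.univ.orderEmbOfFin (rfl : (Finset.univ : Finset (Fin n)).card = _))
      = ⇑(Equiv.ofBijective _ hb) := rfl
  rw [this, Matrix.det_submatrix_equiv_self]

lemma image_univ_perm {n : ℕ} (π : Equiv.Perm (Fin n)) :
    (Finset.univ : Finset (Fin n)).image ⇑π = Finset.univ := by
  apply Finset.eq_of_subset_of_card_le (Finset.subset_univ _)
  rw [Finset.card_image_of_injective _ π.injective]

/-- Minors of a principal submatrix are minors of the original matrix. -/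
lemma minorOn_psub {n : ℕ} (M : Matrix (Fin n) (Fin n) ℝ) (γ : Finset (Fin n))
    (s t : Finset (Fin γ.card)) (hst : t.card = s.card) :
    minorOn (psub M γ) s t
      = minorOn M (s.image ⇑(γ.orderEmbOfFin rfl)) (t.image ⇑(γ.orderEmbOfFin rfl)) := by
  set e := γ.orderEmbOfFin rfl with he
  have hins : (s.image ⇑e).card = s.card := Finset.card_image_of_injective s e.injective
  have hint : (t.image ⇑e).card = s.card :=
    (Finset.card_image_of_injective t e.injective).trans hst
  rw [minorOn, dif_pos hst, minorOn_eq M _ _ hins hint]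
  have hr : ⇑((s.image ⇑e).orderEmbOfFin hins) = ⇑e ∘ ⇑(s.orderEmbOfFin rfl) := by
    refine (Finset.orderEmbOfFin_unique hins
      (fun p => Finset.mem_image_of_mem _ (s.orderEmbOfFin_mem rfl p)) ?_).symm
    exact e.strictMono.comp (s.orderEmbOfFin rfl).strictMono
  have hc : ⇑((t.image ⇑e).orderEmbOfFin hint) = ⇑e ∘ ⇑(t.orderEmbOfFin hst) := by
    refine (Finset.orderEmbOfFin_unique hint
      (fun p => Finset.mem_image_of_mem _ (t.orderEmbOfFin_mem hst p)) ?_).symm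
    exact e.strictMono.comp (t.orderEmbOfFin hst).strictMono
  rw [hr, hc]
  rfl

lemma exists_erase {α : Type*} [DecidableEq α] {u v : Finset α} (hsub : u ⊆ v)
    (hcard : u.card + 1 = v.card) : ∃ r ∈ v, u = v.erase r := by
  have h1 : (v \ u).card = 1 := by
    rw [Finset.card_sdiff_of_subset hsub]; omega
  obtain ⟨r, hr⟩ := Finset.card_eq_one.1 h1
  have hrv : r ∈ v \ u := by rw [hr]; exact Finset.mem_singleton_self r
  have hrv' := Finset.mem_sdiff.1 hrv
  refine ⟨r, hrv'.1, ?_⟩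
  apply Finset.eq_of_subset_of_card_le
  · intro x hx
    exact Finset.mem_erase.2 ⟨fun hxr => hrv'.2 (hxr ▸ hx), hsub hx⟩
  · rw [Finset.card_erase_of_mem hrv'.1]; omega

lemma permL {n : ℕ} (σ : Equiv.Perm (Fin n)) (M : Matrix (Fin n) (Fin n) ℝ) :
    (Matrix.of fun i j : Fin n => if σ j = i then (1 : ℝ) else 0) * M
      = M.submatrix (⇑σ.symm) id := by
  ext i j
  rw [Matrix.mul_apply]
  simp only [Matrix.of_apply, ite_mul, one_mul, zero_mul, Equiv.apply_eq_iff_eq_symm_apply]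
  rw [Finset.sum_ite_eq' Finset.univ (σ.symm i) (fun k => M k j)]
  simp [Matrix.submatrix_apply]

lemma permR {n : ℕ} (σ : Equiv.Perm (Fin n)) (M : Matrix (Fin n) (Fin n) ℝ) :
    M * (Matrix.of fun i j : Fin n => if σ i = j then (1 : ℝ) else 0)
      = M.submatrix id ⇑σ.symm := by
  ext i j
  rw [Matrix.mul_apply]
  simp only [Matrix.of_apply, mul_ite, mul_one, mul_zero, Equiv.apply_eq_iff_eq_symm_apply]
  rw [Finset.sum_ite_eq' Finset.univ (σ.symm j) (fun k => M i k)]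
  simp [Matrix.submatrix_apply]

lemma conj_eq {n : ℕ} (A : Matrix (Fin n) (Fin n) ℝ) (σ : Equiv.Perm (Fin n)) (d : Fin n → ℝ)
    (hd : ∀ i, d i ≠ 0) :
    (Matrix.of fun i j : Fin n => if σ j = i then (1 : ℝ) else 0) * Matrix.diagonal d * A
        * (Matrix.diagonal d)⁻¹
        * (Matrix.of fun i j : Fin n => if σ j = i then (1 : ℝ) else 0)⁻¹
      = Matrix.of fun i j => d (σ.symm i) * A (σ.symm i) (σ.symm j) * (d (σ.symm j))⁻¹ := by
  have hD : (Matrix.diagonal d)⁻¹ = Matrix.diagonal (fun i => (d i)⁻¹) := by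
    apply Matrix.inv_eq_right_inv
    rw [Matrix.diagonal_mul_diagonal]
    have : (fun i => d i * (d i)⁻¹) = fun _ => (1 : ℝ) := by
      funext i; exact mul_inv_cancel₀ (hd i)
    rw [this, Matrix.diagonal_one]
  have hP : (Matrix.of fun i j : Fin n => if σ j = i then (1 : ℝ) else 0)⁻¹
      = Matrix.of fun i j : Fin n => if σ i = j then (1 : ℝ) else 0 := by
    apply Matrix.inv_eq_right_inv
    rw [permL]
    ext i j
    simp only [Matrix.submatrix_apply, Matrix.of_apply, id_eq, Matrix.one_apply,
      Equiv.apply_eq_iff_eq_symm_apply, Equiv.symm_apply_apply]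

  rw [hD, hP, permR σ, mul_assoc, mul_assoc,
    show Matrix.diagonal d * (A * Matrix.diagonal fun i => (d i)⁻¹)
      = Matrix.diagonal d * A * Matrix.diagonal fun i => (d i)⁻¹ from (mul_assoc _ _ _).symm,
    permL σ]
  ext i j
  simp [Matrix.submatrix_apply, Matrix.mul_diagonal, Matrix.diagonal_mul]

/-- If `A` is a K-matrix then, for every permutation matrix `P`
(of a permutation `σ`) and every nonsingular diagonal matrix `D = diag d`, the matrix
`P D A D⁻¹ P⁻¹` is a JSK-matrix; if `A` is an SK-matrix, then `P D A D⁻¹ P⁻¹` is an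
SJSK-matrix. -/
theorem perm_diag_conj_K_is_JSK {n : ℕ} (A : Matrix (Fin n) (Fin n) ℝ)
    (σ : Equiv.Perm (Fin n)) (d : Fin n → ℝ) (hd : ∀ i, d i ≠ 0) :
    (IsK A → IsJSK ((Matrix.of fun i j : Fin n => if σ j = i then (1 : ℝ) else 0)
        * Matrix.diagonal d * A * (Matrix.diagonal d)⁻¹
        * (Matrix.of fun i j : Fin n => if σ j = i then (1 : ℝ) else 0)⁻¹)) ∧
    (IsSK A → IsSJSK ((Matrix.of fun i j : Fin n => if σ j = i then (1 : ℝ) else 0)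
        * Matrix.diagonal d * A * (Matrix.diagonal d)⁻¹
        * (Matrix.of fun i j : Fin n => if σ j = i then (1 : ℝ) else 0)⁻¹)) := by
  rw [conj_eq A σ d hd]
  set B : Matrix (Fin n) (Fin n) ℝ :=
    Matrix.of fun i j => d (σ.symm i) * A (σ.symm i) (σ.symm j) * (d (σ.symm j))⁻¹ with hB
  set w : Finset (Fin n) → ℝ := wght σ.symm (fun i => d (σ.symm i)) with hw
  have hwne : ∀ γ, w γ ≠ 0 := fun γ => wght_ne_zero _ _ (fun i => hd _) γ
  have key : ∀ α β : Finset (Fin n), β.card = α.card →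
      minorOn B α β = w α * (w β)⁻¹ * minorOn A (α.image ⇑σ.symm) (β.image ⇑σ.symm) :=
    fun α β hc => minor_transform A σ.symm (fun i => d (σ.symm i)) α β hc
  have princ : (∀ α : Finset (Fin n), α.Nonempty → 0 < minorOn A α α) →
      ∀ α : Finset (Fin n), α.Nonempty → 0 < minorOn B α α := by
    intro hA α hα
    rw [key α α rfl, mul_inv_cancel₀ (hwne α), one_mul]
    exact hA _ (hα.image _)
  have compEntry : ∀ (α : Finset (Fin n)) (s t : Finset (Fin α.card)),
      s.card = α.card - 1 → t.card = α.card - 1 →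
      minorOn (psub B α) s t
        = w (s.image ⇑(α.orderEmbOfFin rfl)) * (w (t.image ⇑(α.orderEmbOfFin rfl)))⁻¹
          * minorOn A ((s.image ⇑(α.orderEmbOfFin rfl)).image ⇑σ.symm)
              ((t.image ⇑(α.orderEmbOfFin rfl)).image ⇑σ.symm) := by
    intro α s t hs ht
    have hcards : (t.image ⇑(α.orderEmbOfFin rfl)).card
        = (s.image ⇑(α.orderEmbOfFin rfl)).card := by
      rw [Finset.card_image_of_injective _ (α.orderEmbOfFin rfl).injective,
        Finset.card_image_of_injective _ (α.orderEmbOfFin rfl).injective, hs, ht]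
    rw [minorOn_psub B α s t (ht.trans hs.symm), key _ _ hcards]
  have baseShape : ∀ (α : Finset (Fin n)), 2 ≤ α.card →
      ∀ (s : Finset (Fin α.card)), s.card = α.card - 1 →
      ∃ r, r ∈ α.image ⇑σ.symm ∧
        (s.image ⇑(α.orderEmbOfFin rfl)).image ⇑σ.symm = (α.image ⇑σ.symm).erase r := by
    intro α hα s hs
    have hsub : (s.image ⇑(α.orderEmbOfFin rfl)).image ⇑σ.symm ⊆ α.image ⇑σ.symm := by
      apply Finset.image_subset_image
      exact Finset.image_subset_iff.2 fun x _ => α.orderEmbOfFin_mem rfl x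
    have hcard : ((s.image ⇑(α.orderEmbOfFin rfl)).image ⇑σ.symm).card + 1
        = (α.image ⇑σ.symm).card := by
      rw [Finset.card_image_of_injective _ σ.symm.injective,
        Finset.card_image_of_injective _ (α.orderEmbOfFin rfl).injective,
        Finset.card_image_of_injective _ σ.symm.injective, hs]
      omega
    obtain ⟨r, hr, hrs⟩ := exists_erase hsub hcard
    exact ⟨r, hr, hrs⟩
  have erase_pos : ∀ (α : Finset (Fin n)), 2 ≤ α.card → ∀ r : Fin n,
      ((α.image ⇑σ.symm).erase r).Nonempty → True := fun _ _ _ _ => trivial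
  -- generic base bound
  have baseK : (∀ α : Finset (Fin n), α.Nonempty → 0 < minorOn A α α) →
      (∀ (α : Finset (Fin n)) (r s : Fin n), r ∈ α → s ∈ α → r ≠ s →
        0 ≤ minorOn A (α.erase r) (α.erase s)) →
      ∀ (α : Finset (Fin n)), 2 ≤ α.card → ∀ (s t : Finset (Fin α.card)),
        s.card = α.card - 1 → t.card = α.card - 1 →
        0 ≤ minorOn A ((s.image ⇑(α.orderEmbOfFin rfl)).image ⇑σ.symm)
            ((t.image ⇑(α.orderEmbOfFin rfl)).image ⇑σ.symm) := by
    intro h1 h2 α hα s t hs ht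
    obtain ⟨r, hr, hrs⟩ := baseShape α hα s hs
    obtain ⟨c, hc, hts⟩ := baseShape α hα t ht
    rw [hrs, hts]
    by_cases hrc : r = c
    · subst hrc
      refine le_of_lt (h1 _ ?_)
      apply Finset.card_pos.1
      rw [Finset.card_erase_of_mem hr, Finset.card_image_of_injective _ σ.symm.injective]
      omega
    · exact h2 _ r c hr hc hrc
  have baseSK : (∀ α : Finset (Fin n), α.Nonempty → 0 < minorOn A α α) →
      (∀ (α : Finset (Fin n)) (r s : Fin n), r ∈ α → s ∈ α → r ≠ s →
        0 < minorOn A (α.erase r) (α.erase s)) →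
      ∀ (α : Finset (Fin n)), 2 ≤ α.card → ∀ (s t : Finset (Fin α.card)),
        s.card = α.card - 1 → t.card = α.card - 1 →
        0 < minorOn A ((s.image ⇑(α.orderEmbOfFin rfl)).image ⇑σ.symm)
            ((t.image ⇑(α.orderEmbOfFin rfl)).image ⇑σ.symm) := by
    intro h1 h2 α hα s t hs ht
    obtain ⟨r, hr, hrs⟩ := baseShape α hα s hs
    obtain ⟨c, hc, hts⟩ := baseShape α hα t ht
    rw [hrs, hts]
    by_cases hrc : r = c
    · subst hrc
      refine h1 _ ?_
      apply Finset.card_pos.1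
      rw [Finset.card_erase_of_mem hr, Finset.card_image_of_injective _ σ.symm.injective]
      omega
    · exact h2 _ r c hr hc hrc
  have sgnpos : ∀ a b : ℝ, a ≠ 0 → b ≠ 0 → ((0 < a ∧ 0 < b) ∨ (¬ 0 < a ∧ ¬ 0 < b)) →
      0 < a * b⁻¹ := by
    intro a b ha hb h
    rcases h with ⟨ha', hb'⟩ | ⟨ha', hb'⟩
    · exact mul_pos ha' (inv_pos.2 hb')
    · exact mul_pos_of_neg_of_neg (lt_of_le_of_ne (not_lt.1 ha') ha)
        (inv_lt_zero.2 (lt_of_le_of_ne (not_lt.1 hb') hb))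
  have sgnneg : ∀ a b : ℝ, a ≠ 0 → b ≠ 0 → ((0 < a ∧ ¬ 0 < b) ∨ (¬ 0 < a ∧ 0 < b)) →
      a * b⁻¹ < 0 := by
    intro a b ha hb h
    rcases h with ⟨ha', hb'⟩ | ⟨ha', hb'⟩
    · exact mul_neg_of_pos_of_neg ha' (inv_lt_zero.2 (lt_of_le_of_ne (not_lt.1 hb') hb))
    · exact mul_neg_of_neg_of_pos (lt_of_le_of_ne (not_lt.1 ha') ha) (inv_pos.2 hb')
  constructor
  · -- K case
    intro hA
    refine ⟨princ hA.1, fun α hα => ?_⟩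
    refine ⟨{s | 0 < w (s.1.image ⇑(α.orderEmbOfFin rfl))}, ?_, ?_⟩
    · intro i j hij
      simp only [Set.mem_setOf_eq] at hij
      rw [show compound (psub B α) (α.card - 1) i j = minorOn (psub B α) i.1 j.1 from rfl,
        compEntry α i.1 j.1 i.2 j.2]
      exact mul_nonneg (le_of_lt (sgnpos _ _ (hwne _) (hwne _) hij))
        (baseK hA.1 hA.2 α hα i.1 j.1 i.2 j.2)
    · intro i j hij
      simp only [Set.mem_setOf_eq] at hij
      rw [show compound (psub B α) (α.card - 1) i j = minorOn (psub B α) i.1 j.1 from rfl,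
        compEntry α i.1 j.1 i.2 j.2]
      exact mul_nonpos_iff.2 (Or.inr ⟨le_of_lt (sgnneg _ _ (hwne _) (hwne _) hij),
        baseK hA.1 hA.2 α hα i.1 j.1 i.2 j.2⟩)
  · -- SK case
    intro hA
    refine ⟨?_, fun α hα => ?_⟩
    · rcases Nat.eq_zero_or_pos n with hn | hn
      · subst hn
        rw [Matrix.det_isEmpty]
        norm_num
      · have huniv : (Finset.univ : Finset (Fin n)).Nonempty := ⟨⟨0, hn⟩, Finset.mem_univ _⟩
        rw [← minorOn_univ_s18 B, key Finset.univ Finset.univ rfl, mul_inv_cancel₀ (hwne _),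
          one_mul, image_univ_perm]
        exact hA.1 _ huniv
    · refine ⟨{s | 0 < w (s.1.image ⇑(α.orderEmbOfFin rfl))}, ⟨?_, ?_⟩, ?_⟩
      · intro i j hij
        simp only [Set.mem_setOf_eq] at hij
        rw [show compound (psub B α) (α.card - 1) i j = minorOn (psub B α) i.1 j.1 from rfl,
          compEntry α i.1 j.1 i.2 j.2]
        exact mul_nonneg (le_of_lt (sgnpos _ _ (hwne _) (hwne _) hij))
          (le_of_lt (baseSK hA.1 hA.2 α hα i.1 j.1 i.2 j.2))
      · intro i j hij
        simp only [Set.mem_setOf_eq] at hij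
        rw [show compound (psub B α) (α.card - 1) i j = minorOn (psub B α) i.1 j.1 from rfl,
          compEntry α i.1 j.1 i.2 j.2]
        exact mul_nonpos_iff.2 (Or.inr ⟨le_of_lt (sgnneg _ _ (hwne _) (hwne _) hij),
          le_of_lt (baseSK hA.1 hA.2 α hα i.1 j.1 i.2 j.2)⟩)
      · intro i j
        rw [show compound (psub B α) (α.card - 1) i j = minorOn (psub B α) i.1 j.1 from rfl,
          compEntry α i.1 j.1 i.2 j.2]
        exact mul_ne_zero (mul_ne_zero (hwne _) (inv_ne_zero (hwne _)))
          (ne_of_gt (baseSK hA.1 hA.2 α hα i.1 j.1 i.2 j.2))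
end

section
/- Let A be an n×n SK-matrix and set A_λ = A − λI. Then for every λ > 0, the product of the two almost principal minors A_λ(1, 2, …, n−1 ; 2, 3, …, n) and A_λ(2, 3, …, n ; 1, 2, …, n−1) is positive: A_λ(1,…,n−1 ; 2,…,n) · A_λ(2,…,n ; 1,…,n−1) > 0. -/
open Matrix

lemma basisRowDet {m : ℕ} (M : Matrix (Fin (m+1)) (Fin (m+1)) ℝ) (i k : Fin (m+1)) :
    (M.updateRow i (Pi.single k 1)).det
      = (-1)^((i:ℕ)+(k:ℕ)) * ((M.submatrix i.succAbove k.succAbove)).det := by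
  rw [det_succ_row _ i, Finset.sum_eq_single k]
  · rw [submatrix_updateRow_succAbove]
    simp
  · intro j _ hj
    simp [Pi.single_eq_of_ne hj]
  · simp

lemma orderEmbIdx {n m : ℕ} (s : Finset (Fin n)) (h : s.card = m) (i : Fin m) :
    (s.filter (fun x => x < s.orderEmbOfFin h i)).card = (i : ℕ) := by
  have himg : s.filter (fun x => x < s.orderEmbOfFin h i)
      = (Finset.Iio i).image (s.orderEmbOfFin h) := by
    ext x
    simp only [Finset.mem_filter, Finset.mem_image, Finset.mem_Iio]
    constructor
    · rintro ⟨hx, hlt⟩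
      obtain ⟨j, hj⟩ : x ∈ Set.range ⇑(s.orderEmbOfFin h) := by
        rw [Finset.range_orderEmbOfFin]; exact hx
      exact ⟨j, (s.orderEmbOfFin h).lt_iff_lt.mp (hj ▸ hlt), hj⟩
    · rintro ⟨j, hji, rfl⟩
      exact ⟨Finset.orderEmbOfFin_mem s h j, (s.orderEmbOfFin h).strictMono hji⟩
  rw [himg, Finset.card_image_of_injective _ (s.orderEmbOfFin h).injective, Fin.card_Iio]

lemma detEqMinorOn {n m : ℕ} (B : Matrix (Fin n) (Fin n) ℝ) (α β : Finset (Fin n))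
    (hα : α.card = m) (hβ : β.card = m) (f g : Fin m → Fin n)
    (hf : StrictMono f) (hg : StrictMono g)
    (hfα : ∀ x, f x ∈ α) (hgβ : ∀ x, g x ∈ β) :
    (B.submatrix f g).det = minorOn B α β := by
  have hβα : β.card = α.card := by rw [hα, hβ]
  rw [minorOn, dif_pos hβα]
  have hcast : StrictMono (Fin.cast hα : Fin α.card → Fin m) := fun _ _ hab => hab
  have h1 : (fun j : Fin α.card => f (Fin.cast hα j)) = ⇑(α.orderEmbOfFin rfl) :=
    Finset.orderEmbOfFin_unique rfl (fun x => hfα _) (hf.comp hcast)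
  have h2 : (fun j : Fin α.card => g (Fin.cast hα j)) = ⇑(β.orderEmbOfFin hβα) :=
    Finset.orderEmbOfFin_unique hβα (fun x => hgβ _) (hg.comp hcast)
  have heq : B.submatrix (⇑(α.orderEmbOfFin rfl)) (⇑(β.orderEmbOfFin hβα))
      = (B.submatrix f g).submatrix (⇑(finCongr hα)) (⇑(finCongr hα)) := by
    ext a b
    rw [← h1, ← h2]
    simp
  rw [heq, det_submatrix_equiv_self]

lemma minorOnCongr {n : ℕ} {M N : Matrix (Fin n) (Fin n) ℝ} {α β : Finset (Fin n)}
    (h : ∀ i ∈ α, ∀ j ∈ β, M i j = N i j) : minorOn M α β = minorOn N α β := by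
  unfold minorOn
  split
  · congr 1
    ext i j
    exact h _ (Finset.orderEmbOfFin_mem _ _ _) _ (Finset.orderEmbOfFin_mem _ _ _)
  · rfl

lemma key {n : ℕ} (A : Matrix (Fin n) (Fin n) ℝ) (hA : IsSK A) (lam : ℝ) (hlam : 0 ≤ lam) :
    ∀ (d : ℕ) (D α : Finset (Fin n)) (r s : Fin n),
      D.card = d → r ∈ α → s ∈ α → r ≠ s → D ⊆ α → r ∉ D → s ∉ D →
      (∀ t ∈ D, (r < t ∧ t < s) ∨ (s < t ∧ t < r)) →
      0 < minorOn (Matrix.of fun i j => A i j - if i = j ∧ i ∈ D then lam else 0)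
          (α.erase r) (α.erase s) := by
  intro d
  induction d with
  | zero =>
    intro D α r s hDd hr hs hrs _ _ _ _
    have hD : D = ∅ := Finset.card_eq_zero.mp hDd
    subst hD
    have hBA : (Matrix.of fun i j => A i j - if i = j ∧ i ∈ (∅ : Finset (Fin n)) then lam else 0) = A := by
      ext i j; simp
    rw [hBA]
    exact hA.2 α r s hr hs hrs
  | succ d ih =>
    intro D α r s hDd hr hs hrs hDα hrD hsD hbet
    obtain ⟨t, ht⟩ : D.Nonempty := Finset.card_pos.mp (by omega)
    set R := α.erase r with hRdef
    set C := α.erase s with hCdef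
    have htr : t ≠ r := fun h => hrD (h ▸ ht)
    have hts : t ≠ s := fun h => hsD (h ▸ ht)
    have htR : t ∈ R := Finset.mem_erase.mpr ⟨htr, hDα ht⟩
    have htC : t ∈ C := Finset.mem_erase.mpr ⟨hts, hDα ht⟩
    have hsR : s ∈ R := Finset.mem_erase.mpr ⟨Ne.symm hrs, hs⟩
    have hrC : r ∈ C := Finset.mem_erase.mpr ⟨hrs, hr⟩
    have hcard : C.card = R.card := by
      rw [hRdef, hCdef, Finset.card_erase_of_mem hs, Finset.card_erase_of_mem hr]
    obtain ⟨m, hm⟩ : ∃ m, R.card = m + 1 :=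
      ⟨R.card - 1, by have := Finset.card_pos.mpr ⟨t, htR⟩; omega⟩
    set D' := D.erase t with hD'def
    have hD'd : D'.card = d := by
      rw [hD'def, Finset.card_erase_of_mem ht, hDd]
      omega

    set e := R.orderEmbOfFin (rfl : R.card = R.card) with hedef
    set f := C.orderEmbOfFin hcard with hfdef
    obtain ⟨i, hi⟩ : t ∈ Set.range ⇑e := by rw [hedef, Finset.range_orderEmbOfFin]; exact htR
    obtain ⟨k, hk⟩ : t ∈ Set.range ⇑f := by rw [hfdef, Finset.range_orderEmbOfFin]; exact htC
    set BD := (Matrix.of fun i j => A i j - if i = j ∧ i ∈ D then lam else 0) with hBDdef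
    set BD' := (Matrix.of fun i j => A i j - if i = j ∧ i ∈ D' then lam else 0) with hBD'def
    set M' := BD'.submatrix ⇑e ⇑f with hM'def
    rw [minorOn, dif_pos hcard]
    -- Step A : decompose
    have hdecomp : BD.submatrix ⇑e ⇑f
        = M'.updateRow i (M' i + (-lam) • (Pi.single k 1 : Fin R.card → ℝ)) := by
      ext a b
      rcases eq_or_ne a i with rfl | hab
      · rw [Matrix.updateRow_self]
        have hfb : (t = f b) ↔ (b = k) := by
          constructor
          · intro h; exact (f.injective (hk.trans h)).symm
          · rintro rfl; exact hk.symm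
        have htD' : t ∉ D' := Finset.notMem_erase t D
        simp only [hM'def, hBDdef, hBD'def, Matrix.submatrix_apply, Matrix.of_apply, hi,
          Pi.add_apply, Pi.smul_apply, smul_eq_mul]
        rcases eq_or_ne b k with rfl | hbk
        · rw [if_pos ⟨hfb.mpr rfl, ht⟩, if_neg (fun h => htD' h.2), Pi.single_eq_same]
          ring
        · rw [if_neg (fun h => hbk (hfb.mp h.1)), if_neg (fun h => htD' h.2),
            Pi.single_eq_of_ne hbk]
          ring
      · rw [Matrix.updateRow_ne hab]
        have hea : e a ≠ t := fun h => hab (e.injective (h.trans hi.symm))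
        simp only [hM'def, hBDdef, hBD'def, Matrix.submatrix_apply, Matrix.of_apply]
        congr 1
        refine if_congr ?_ rfl rfl
        constructor
        · rintro ⟨h1, h2⟩; exact ⟨h1, Finset.mem_erase.mpr ⟨hea, h2⟩⟩
        · rintro ⟨h1, h2⟩; exact ⟨h1, Finset.mem_of_mem_erase h2⟩
    rw [hdecomp, det_updateRow_add, det_updateRow_smul, Matrix.updateRow_eq_self]
    -- Step C : first term positive by IH
    have h1 : 0 < M'.det := by
      have := ih D' α r s hD'd hr hs hrs ((Finset.erase_subset _ _).trans hDα)
        (fun h => hrD (Finset.mem_of_mem_erase h)) (fun h => hsD (Finset.mem_of_mem_erase h))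
        (fun t' ht' => hbet t' (Finset.mem_of_mem_erase ht'))
      rwa [minorOn, dif_pos hcard] at this
    -- Step D : basis-row determinant
    set c : Fin (m+1) → Fin R.card := Fin.cast hm.symm with hcdef
    set i' : Fin (m+1) := Fin.cast hm i with hi'def
    set k' : Fin (m+1) := Fin.cast hm k with hk'def
    have hG : (M'.updateRow i (Pi.single k 1)).det
        = ((M'.updateRow i (Pi.single k 1)).submatrix c c).det := by
      rw [show c = ⇑(finCongr hm.symm) from rfl, det_submatrix_equiv_self]
    have hGsub : (M'.updateRow i (Pi.single k 1)).submatrix c c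
        = (M'.submatrix c c).updateRow i' (Pi.single k' 1) := by
      ext a b
      by_cases hai : a = i'
      · subst hai
        have : c i' = i := by simp [hcdef, hi'def]
        simp only [Matrix.submatrix_apply, this, Matrix.updateRow_self]
        simp [Pi.single_apply, hcdef, hk'def, Fin.ext_iff]
      · have : c a ≠ i := by
          intro h; apply hai; rw [hi'def, ← h, hcdef]; rfl
        rw [Matrix.submatrix_apply, Matrix.updateRow_ne this, Matrix.updateRow_ne hai,
          Matrix.submatrix_apply]
    -- the deleted minor
    have hdel : ((M'.submatrix c c).submatrix i'.succAbove k'.succAbove).det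
        = minorOn BD' (R.erase t) (C.erase t) := by
      have hRt : (R.erase t).card = m := by
        rw [Finset.card_erase_of_mem htR, hm]
        omega
      have hCt : (C.erase t).card = m := by
        rw [Finset.card_erase_of_mem htC, hcard, hm]
        omega
      have hrows : StrictMono (fun x : Fin m => e (c (i'.succAbove x))) := by
        intro a b hab
        exact e.strictMono (Fin.strictMono_succAbove i' hab)
      have hcols : StrictMono (fun x : Fin m => f (c (k'.succAbove x))) := by
        intro a b hab
        exact f.strictMono (Fin.strictMono_succAbove k' hab)
      have hrmem : ∀ x, e (c (i'.succAbove x)) ∈ R.erase t := by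
        intro x
        refine Finset.mem_erase.mpr ⟨?_, Finset.orderEmbOfFin_mem _ _ _⟩
        intro h
        have h2 : c (i'.succAbove x) = i := e.injective (h.trans hi.symm)
        have hv : ((i'.succAbove x : Fin (m+1)) : ℕ) = (i : ℕ) := congrArg Fin.val h2
        exact Fin.succAbove_ne i' x (Fin.ext hv)
      have hcmem : ∀ x, f (c (k'.succAbove x)) ∈ C.erase t := by
        intro x
        refine Finset.mem_erase.mpr ⟨?_, Finset.orderEmbOfFin_mem _ _ _⟩
        intro h
        have h2 : c (k'.succAbove x) = k := f.injective (h.trans hk.symm)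
        have hv : ((k'.succAbove x : Fin (m+1)) : ℕ) = (k : ℕ) := congrArg Fin.val h2
        exact Fin.succAbove_ne k' x (Fin.ext hv)
      exact detEqMinorOn BD' (R.erase t) (C.erase t) hRt hCt _ _ hrows hcols hrmem hcmem
    -- positivity of the deleted minor by IH at α.erase t
    have h2 : 0 < minorOn BD' (R.erase t) (C.erase t) := by
      have hre : R.erase t = (α.erase t).erase r := by
        rw [hRdef]; exact Finset.erase_right_comm
      have hce : C.erase t = (α.erase t).erase s := by
        rw [hCdef]; exact Finset.erase_right_comm
      rw [hre, hce]
      exact ih D' (α.erase t) r s hD'd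
        (Finset.mem_erase.mpr ⟨Ne.symm htr, hr⟩)
        (Finset.mem_erase.mpr ⟨Ne.symm hts, hs⟩) hrs
        (fun x hx => Finset.mem_erase.mpr ⟨Finset.ne_of_mem_erase hx, hDα (Finset.mem_of_mem_erase hx)⟩)
        (fun h => hrD (Finset.mem_of_mem_erase h)) (fun h => hsD (Finset.mem_of_mem_erase h))
        (fun t' ht' => hbet t' (Finset.mem_of_mem_erase ht'))
    -- sign computation
    have hsign : ((-1 : ℝ))^((i' : ℕ)+(k' : ℕ)) = -1 := by
      have hiv : (i : ℕ) = (R.filter (fun x => x < t)).card := by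
        rw [← hi]; exact (orderEmbIdx R rfl i).symm
      have hkv : (k : ℕ) = (C.filter (fun x => x < t)).card := by
        rw [← hk]; exact (orderEmbIdx C hcard k).symm
      have hRf : R.filter (fun x => x < t) = (α.filter (fun x => x < t)).erase r := by
        rw [hRdef]; ext x
        simp only [Finset.mem_filter, Finset.mem_erase]
        tauto
      have hCf : C.filter (fun x => x < t) = (α.filter (fun x => x < t)).erase s := by
        rw [hCdef]; ext x
        simp only [Finset.mem_filter, Finset.mem_erase]
        tauto
      set cα := (α.filter (fun x => x < t)).card with hcαdef
      have hodd : Odd ((i' : ℕ) + (k' : ℕ)) := by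
        have hi'v : (i' : ℕ) = (i : ℕ) := rfl
        have hk'v : (k' : ℕ) = (k : ℕ) := rfl
        rcases hbet t ht with ⟨hrt, hts'⟩ | ⟨hst, htr'⟩
        · -- r < t < s : r ∈ filter, s ∉ filter
          have hrf : r ∈ α.filter (fun x => x < t) := Finset.mem_filter.mpr ⟨hr, hrt⟩
          have hsf : s ∉ α.filter (fun x => x < t) := by
            simp only [Finset.mem_filter]; rintro ⟨-, h⟩; exact absurd (h.trans hts') (lt_irrefl s)
          have h1' : (i : ℕ) = cα - 1 := by
            rw [hiv, hRf, Finset.card_erase_of_mem hrf]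
          have h2' : (k : ℕ) = cα := by
            rw [hkv, hCf, Finset.erase_eq_of_notMem hsf]
          have hc1 : 1 ≤ cα := Finset.card_pos.mpr ⟨r, hrf⟩
          rw [hi'v, hk'v, h1', h2']
          exact ⟨cα - 1, by omega⟩
        · have hsf : s ∈ α.filter (fun x => x < t) := Finset.mem_filter.mpr ⟨hs, hst⟩
          have hrf : r ∉ α.filter (fun x => x < t) := by
            simp only [Finset.mem_filter]; rintro ⟨-, h⟩; exact absurd (h.trans htr') (lt_irrefl r)
          have h1' : (i : ℕ) = cα := by
            rw [hiv, hRf, Finset.erase_eq_of_notMem hrf]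
          have h2' : (k : ℕ) = cα - 1 := by
            rw [hkv, hCf, Finset.card_erase_of_mem hsf]
          have hc1 : 1 ≤ cα := Finset.card_pos.mpr ⟨s, hsf⟩
          rw [hi'v, hk'v, h1', h2']
          exact ⟨cα - 1, by omega⟩
      exact Odd.neg_one_pow hodd
    have hfinal : (M'.updateRow i (Pi.single k 1)).det
        = - minorOn BD' (R.erase t) (C.erase t) := by
      rw [hG, hGsub, basisRowDet, hsign, hdel, neg_one_mul]
    rw [hfinal]
    have : (0:ℝ) < M'.det + -lam * -minorOn BD' (R.erase t) (C.erase t) := by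
      have := mul_nonneg hlam (le_of_lt h2)
      nlinarith
    linarith


/-- Let `A` be an `n×n` SK-matrix and `A_λ = A − λI`. Then for every
`λ > 0` the product of the two almost principal minors
`A_λ(1,…,n−1 ; 2,…,n)` and `A_λ(2,…,n ; 1,…,n−1)` is positive (in 0-indexed terms the
row/column sets are `{0,…,n−2}` and `{1,…,n−1}`). -/
theorem sk_corner_minor_product_pos {n : ℕ} (A : Matrix (Fin n) (Fin n) ℝ)
    (hA : IsSK A) (lam : ℝ) (hlam : 0 < lam) :
    0 < minorOn (A - lam • (1 : Matrix (Fin n) (Fin n) ℝ))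
          (Finset.univ.filter (fun i : Fin n => (i : ℕ) < n - 1))
          (Finset.univ.filter (fun i : Fin n => 1 ≤ (i : ℕ)))
        * minorOn (A - lam • (1 : Matrix (Fin n) (Fin n) ℝ))
          (Finset.univ.filter (fun i : Fin n => 1 ≤ (i : ℕ)))
          (Finset.univ.filter (fun i : Fin n => (i : ℕ) < n - 1)) := by
  rcases Nat.lt_or_ge n 2 with hn | hn
  · -- n = 0 or 1 : both index sets are empty, each minor is an empty determinant = 1
    have hR : (Finset.univ.filter (fun i : Fin n => (i : ℕ) < n - 1)) = (∅ : Finset (Fin n)) := by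
      ext i
      simp only [Finset.mem_filter, Finset.mem_univ, true_and, Finset.notMem_empty, iff_false]
      have := i.isLt; omega
    have hC : (Finset.univ.filter (fun i : Fin n => 1 ≤ (i : ℕ))) = (∅ : Finset (Fin n)) := by
      ext i
      simp only [Finset.mem_filter, Finset.mem_univ, true_and, Finset.notMem_empty, iff_false]
      have := i.isLt; omega
    rw [hR, hC]
    have h1 : minorOn (A - lam • (1 : Matrix (Fin n) (Fin n) ℝ)) ∅ ∅ = 1 := by
      rw [minorOn, dif_pos rfl]
      exact Matrix.det_fin_zero
    rw [h1]
    norm_num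
  · -- n ≥ 2
    set l : Fin n := ⟨n - 1, by omega⟩ with hldef
    set z : Fin n := ⟨0, by omega⟩ with hzdef
    have hlz : l ≠ z := by
      simp only [hldef, hzdef, Ne, Fin.ext_iff]
      omega
    have hR : (Finset.univ.filter (fun i : Fin n => (i : ℕ) < n - 1)) = Finset.univ.erase l := by
      ext i
      simp only [Finset.mem_filter, Finset.mem_univ, true_and, Finset.mem_erase, and_true,
        Ne, Fin.ext_iff, hldef]
      have := i.isLt; omega
    have hC : (Finset.univ.filter (fun i : Fin n => 1 ≤ (i : ℕ))) = Finset.univ.erase z := by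
      ext i
      simp only [Finset.mem_filter, Finset.mem_univ, true_and, Finset.mem_erase, and_true,
        Ne, Fin.ext_iff, hzdef]
      omega
    set D : Finset (Fin n) := (Finset.univ.erase l).erase z with hDdef
    have hlD : l ∉ D := fun h =>
      (Finset.notMem_erase l Finset.univ) (Finset.mem_of_mem_erase h)
    have hzD : z ∉ D := fun h => (Finset.notMem_erase z _) h
    have hbet : ∀ t ∈ D, (z < t ∧ t < l) ∨ (l < t ∧ t < z) := by
      intro t htD
      left
      have h1 : t ≠ z := Finset.ne_of_mem_erase htD
      have h2 : t ≠ l := Finset.ne_of_mem_erase (Finset.mem_of_mem_erase htD)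
      have hv := t.isLt
      constructor
      · have : (t : ℕ) ≠ 0 := fun h => h1 (Fin.ext (by simp [hzdef, h]))
        simp only [Fin.lt_def, hzdef]
        omega
      · have : (t : ℕ) ≠ n - 1 := fun h => h2 (Fin.ext (by simp [hldef, h]))
        simp only [Fin.lt_def, hldef]
        omega
    have hmatch : ∀ i ∈ (Finset.univ.erase l : Finset (Fin n)), ∀ j ∈ (Finset.univ.erase z : Finset (Fin n)),
        (A - lam • (1 : Matrix (Fin n) (Fin n) ℝ)) i j
          = (Matrix.of fun i j => A i j - if i = j ∧ i ∈ D then lam else 0) i j := by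
      intro i hi j hj
      simp only [Matrix.sub_apply, Matrix.smul_apply, Matrix.one_apply, smul_eq_mul,
        Matrix.of_apply]
      rcases eq_or_ne i j with rfl | hij
      · have : i ∈ D := Finset.mem_erase.mpr ⟨Finset.ne_of_mem_erase hj, hi⟩
        simp [this]
      · simp [hij]
    have hmatch' : ∀ i ∈ (Finset.univ.erase z : Finset (Fin n)), ∀ j ∈ (Finset.univ.erase l : Finset (Fin n)),
        (A - lam • (1 : Matrix (Fin n) (Fin n) ℝ)) i j
          = (Matrix.of fun i j => A i j - if i = j ∧ i ∈ D then lam else 0) i j := by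
      intro i hi j hj
      simp only [Matrix.sub_apply, Matrix.smul_apply, Matrix.one_apply, smul_eq_mul,
        Matrix.of_apply]
      rcases eq_or_ne i j with rfl | hij
      · have : i ∈ D := Finset.mem_erase.mpr ⟨Finset.ne_of_mem_erase hi, hj⟩
        simp [this]
      · simp [hij]
    have hDuniv : D ⊆ Finset.univ := Finset.subset_univ D
    have e1 : Finset.univ.erase l = (Finset.univ : Finset (Fin n)).erase l := rfl
    have h1 : 0 < minorOn (A - lam • (1 : Matrix (Fin n) (Fin n) ℝ))
        (Finset.univ.erase l) (Finset.univ.erase z) := by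
      rw [minorOnCongr hmatch]
      exact key A hA lam hlam.le D.card D Finset.univ l z rfl (Finset.mem_univ l)
        (Finset.mem_univ z) hlz hDuniv hlD hzD
        (fun t ht => (hbet t ht).elim (fun h => Or.inr h) (fun h => Or.inl h))
    have h2 : 0 < minorOn (A - lam • (1 : Matrix (Fin n) (Fin n) ℝ))
        (Finset.univ.erase z) (Finset.univ.erase l) := by
      rw [minorOnCongr hmatch']
      exact key A hA lam hlam.le D.card D Finset.univ z l rfl (Finset.mem_univ z)
        (Finset.mem_univ l) hlz.symm hDuniv hzD hlD hbet
    rw [hR, hC]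
    exact mul_pos h1 h2
end
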